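/- arXiv:0904.3979 — 8 statements merged into one kernel-verified Lean document; each statement's English description precedes it below -/
import Mathlib

section
/- Let n ≥ 3 be an integer and let σ, ρ : P_n → P_n be maps such that σ(i) ≠ σ(i+1), ρ(i) ≠ ρ(i+1), and (ρ∘σ)(i) ≠ (ρ∘σ)(i+1) for all 1 ≤ i ≤ n−1. Then, over the field ℤ/2ℤ, the Petrie matrix of ρ∘σ equals the matrix product of the Petrie matrix of σ with the Petrie matrix of ρ, i.e. M_{ρ∘σ} = M_σ · M_ρ in GL-free matrix form over ℤ/2ℤ. -/
open Matrix

/-- `σ` is a permutation of `P_n = {1,…,n}`, viewed as a function `ℕ → ℕ`. -/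
def IsPermOn (n : ℕ) (σ : ℕ → ℕ) : Prop :=
  Set.BijOn σ (Set.Icc 1 n) (Set.Icc 1 n)

/-- The Petrie matrix of a map `σ` on `P_n`: the `(n-1) × (n-1)` real matrix whose
`(i,j)` entry (with `1`-based indices) is `1` iff
`min (σ i) (σ (i+1)) ≤ j ≤ max (σ i) (σ (i+1)) - 1`, and `0` otherwise. -/
def petrie (n : ℕ) (σ : ℕ → ℕ) : Matrix (Fin (n - 1)) (Fin (n - 1)) ℝ :=
  Matrix.of fun i j =>
    if min (σ (i.1 + 1)) (σ (i.1 + 2)) ≤ j.1 + 1 ∧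
        j.1 + 1 ≤ max (σ (i.1 + 1)) (σ (i.1 + 2)) - 1 then 1 else 0

/-- Two square real matrices are similar if `B = P * A * P⁻¹` for some invertible `P`. -/
def MatSimilar {m : Type*} [Fintype m] [DecidableEq m] (A B : Matrix m m ℝ) : Prop :=
  ∃ P : Matrix m m ℝ, IsUnit P ∧ B = P * A * P⁻¹

/-- `σ'` (a permutation of `P_{k+n}`) is a right extension of `σ` (a permutation of `P_k`). -/
def IsRightExt (k n : ℕ) (σ σ' : ℕ → ℕ) : Prop :=
  IsPermOn (k + n) σ' ∧
  (∀ i, 1 ≤ i → i ≤ k - 1 → σ' i = σ i) ∧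
  ∃ t, k + 1 ≤ t ∧ t ≤ k + n ∧ σ' t = σ k ∧
    ∀ j, j ≠ t → k ≤ j → j ≤ k + n → k < σ' j

/-- `(σ', ρ')` is a synchronized right extension of `(σ, ρ)` to `P_{k+n}`. -/
def IsSyncRightExt (k n : ℕ) (σ ρ σ' ρ' : ℕ → ℕ) : Prop :=
  IsRightExt k n σ σ' ∧ IsRightExt k n ρ ρ' ∧
  ∃ t, k + 1 ≤ t ∧ t ≤ k + n ∧ σ' t = σ k ∧ ρ' t = ρ k ∧
    ∀ i, i ≠ t → k ≤ i → i ≤ k + n → σ' i = ρ' i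

/-- `σ'` (a permutation of `P_{m+k}`) is a left extension of `σ` (a permutation of `P_k`). -/
def IsLeftExt (k m : ℕ) (σ σ' : ℕ → ℕ) : Prop :=
  IsPermOn (m + k) σ' ∧
  (∀ i, 2 ≤ i → i ≤ k → σ' (m + i) = m + σ i) ∧
  ∃ s, 1 ≤ s ∧ s ≤ m ∧ σ' s = m + σ 1 ∧
    ∀ j, j ≠ s → 1 ≤ j → j ≤ m + 1 → σ' j < m + 1

/-- `(σ', ρ')` is a synchronized left extension of `(σ, ρ)` to `P_{m+k}`. -/
def IsSyncLeftExt (k m : ℕ) (σ ρ σ' ρ' : ℕ → ℕ) : Prop :=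
  IsLeftExt k m σ σ' ∧ IsLeftExt k m ρ ρ' ∧
  ∃ s, 1 ≤ s ∧ s ≤ m ∧ σ' s = m + σ 1 ∧ ρ' s = m + ρ 1 ∧
    ∀ i, i ≠ s → 1 ≤ i → i ≤ m + 1 → σ' i = ρ' i

/-- `σ'` (a permutation of `P_{m+k+n}`) is a two-sided extension of `σ` (a permutation of `P_k`). -/
def IsTwoSidedExt (k m n : ℕ) (σ σ' : ℕ → ℕ) : Prop :=
  IsPermOn (m + k + n) σ' ∧
  (∀ i, 2 ≤ i → i ≤ k - 1 → σ' (m + i) = m + σ i) ∧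
  (∃ s, 1 ≤ s ∧ s ≤ m ∧ σ' s = m + σ 1 ∧
    ∀ i, i ≠ s → 1 ≤ i → i ≤ m + 1 → σ' i < m + 1) ∧
  (∃ t, m + k + 1 ≤ t ∧ t ≤ m + k + n ∧ σ' t = m + σ k ∧
    ∀ j, j ≠ t → m + k ≤ j → j ≤ m + k + n → m + k < σ' j)

/-- `(σ', ρ')` is a synchronized two-sided extension of `(σ, ρ)` to `P_{m+k+n}`. -/
def IsSyncTwoSidedExt (k m n : ℕ) (σ ρ σ' ρ' : ℕ → ℕ) : Prop :=
  IsTwoSidedExt k m n σ σ' ∧ IsTwoSidedExt k m n ρ ρ' ∧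
  ∃ s t, 1 ≤ s ∧ s ≤ m ∧ m + k + 1 ≤ t ∧ t ≤ m + k + n ∧
    σ' s = m + σ 1 ∧ ρ' s = m + ρ 1 ∧ σ' t = m + σ k ∧ ρ' t = m + ρ k ∧
    ∀ i, i ≠ s → i ≠ t →
      ((1 ≤ i ∧ i ≤ m + 1) ∨ (m + k ≤ i ∧ i ≤ m + k + n)) → σ' i = ρ' i

/-- `σ` and `ρ` (permutations of `P_k`) are right similar. -/
def RightSimilar (k : ℕ) (σ ρ : ℕ → ℕ) : Prop :=
  ∀ n, 1 ≤ n → ∀ σ' ρ' : ℕ → ℕ, IsSyncRightExt k n σ ρ σ' ρ' →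
    MatSimilar (petrie (k + n) σ') (petrie (k + n) ρ')

/-- `σ` and `ρ` (permutations of `P_k`) are left similar. -/
def LeftSimilar (k : ℕ) (σ ρ : ℕ → ℕ) : Prop :=
  ∀ m, 1 ≤ m → ∀ σ' ρ' : ℕ → ℕ, IsSyncLeftExt k m σ ρ σ' ρ' →
    MatSimilar (petrie (m + k) σ') (petrie (m + k) ρ')

/-- `σ` and `ρ` (permutations of `P_k`) are two-sided similar. -/
def TwoSidedSimilar (k : ℕ) (σ ρ : ℕ → ℕ) : Prop :=
  ∀ m n, 1 ≤ m → 1 ≤ n → ∀ σ' ρ' : ℕ → ℕ, IsSyncTwoSidedExt k m n σ ρ σ' ρ' →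
    MatSimilar (petrie (m + k + n) σ') (petrie (m + k + n) ρ')

/-- `σ` and `ρ` (permutations of `P_k`) are right weakly similar. -/
def RightWeaklySimilar (k : ℕ) (σ ρ : ℕ → ℕ) : Prop :=
  ∀ n, 1 ≤ n → ∀ σ' ρ' : ℕ → ℕ, IsSyncRightExt k n σ ρ σ' ρ' →
    (petrie (k + n) σ').charpoly = (petrie (k + n) ρ').charpoly

/-- The Petrie matrix over `ℤ/2ℤ`. -/
def petrieZ2 (n : ℕ) (σ : ℕ → ℕ) : Matrix (Fin (n - 1)) (Fin (n - 1)) (ZMod 2) :=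
  Matrix.of fun i j =>
    if min (σ (i.1 + 1)) (σ (i.1 + 2)) ≤ j.1 + 1 ∧
        j.1 + 1 ≤ max (σ (i.1 + 1)) (σ (i.1 + 2)) - 1 then 1 else 0

private lemma z2_add_self : ∀ x : ZMod 2, x + x = 0 := by decide

/-- Over `ℤ/2`, a Petrie-type entry is the XOR (sum) of two step indicators. -/
private lemma petrie_entry_xor (a b j : ℕ) :
    (if min a b ≤ j + 1 ∧ j + 1 ≤ max a b - 1 then (1 : ZMod 2) else 0) =
      (if a ≤ j + 1 then (1 : ZMod 2) else 0) + (if b ≤ j + 1 then (1 : ZMod 2) else 0) := by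
  by_cases ha : a ≤ j + 1 <;> by_cases hb : b ≤ j + 1
  · rw [if_neg (by omega), if_pos ha, if_pos hb]; decide
  · rw [if_pos (by omega), if_pos ha, if_neg hb, add_zero]
  · rw [if_pos (by omega), if_neg ha, if_pos hb, zero_add]
  · rw [if_neg (by omega), if_neg ha, if_neg hb, add_zero]

/-- Telescoping sums mod 2. -/
private lemma z2_telescope (g : ℕ → ZMod 2) (s : ℕ) :
    ∀ t, s ≤ t → ∑ k ∈ Finset.Ico s t, (g k + g (k + 1)) = g s + g t := by
  intro t ht
  induction t, ht using Nat.le_induction with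
  | base => simp [z2_add_self (g s)]
  | succ t ht ih =>
    rw [Finset.sum_Ico_succ_top ht, ih]
    linear_combination z2_add_self (g t)

private lemma z2_key (n a : ℕ) (f : ℕ → ZMod 2) (ha : 1 ≤ a) (han : a ≤ n) :
    ∑ x : Fin (n - 1), (if a ≤ x.1 + 1 then (1 : ZMod 2) else 0) * (f (x.1 + 1) + f (x.1 + 2)) =
      f a + f n := by
  rw [Fin.sum_univ_eq_sum_range (fun k => (if a ≤ k + 1 then (1 : ZMod 2) else 0) *
      (f (k + 1) + f (k + 2)))]
  have hstep : ∀ k, (if a ≤ k + 1 then (1 : ZMod 2) else 0) * (f (k + 1) + f (k + 2)) =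
      if a - 1 ≤ k then f (k + 1) + f (k + 1 + 1) else 0 := by
    intro k
    by_cases h : a ≤ k + 1
    · rw [if_pos h, if_pos (by omega), one_mul]
    · rw [if_neg h, if_neg (by omega), zero_mul]
  rw [Finset.sum_congr rfl fun k _ => hstep k, Finset.range_eq_Ico,
    ← Finset.sum_Ico_consecutive _ (Nat.zero_le (a - 1)) (show a - 1 ≤ n - 1 by omega),
    Finset.sum_eq_zero (fun k hk => if_neg (by
      have := (Finset.mem_Ico.mp hk).2; omega)), zero_add,
    Finset.sum_congr rfl (fun k hk => if_pos (Finset.mem_Ico.mp hk).1),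
    z2_telescope (fun k => f (k + 1)) (a - 1) (n - 1) (by omega)]
  have h1 : a - 1 + 1 = a := by omega
  have h2 : n - 1 + 1 = n := by omega
  rw [h1, h2]

/-- Theorem 6: over `ℤ/2ℤ`, the Petrie matrix of `ρ ∘ σ` is the product of the Petrie
matrix of `σ` with the Petrie matrix of `ρ`. -/
theorem petrieZ2_comp (n : ℕ) (hn : 3 ≤ n) (σ ρ : ℕ → ℕ)
    (hσmap : ∀ i ∈ Set.Icc 1 n, σ i ∈ Set.Icc 1 n)
    (hρmap : ∀ i ∈ Set.Icc 1 n, ρ i ∈ Set.Icc 1 n)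
    (hσ : ∀ i, 1 ≤ i → i ≤ n - 1 → σ i ≠ σ (i + 1))
    (hρ : ∀ i, 1 ≤ i → i ≤ n - 1 → ρ i ≠ ρ (i + 1))
    (hρσ : ∀ i, 1 ≤ i → i ≤ n - 1 → ρ (σ i) ≠ ρ (σ (i + 1))) :
    petrieZ2 n (ρ ∘ σ) = petrieZ2 n σ * petrieZ2 n ρ := by
  ext i j
  have hi1 : σ (i.1 + 1) ∈ Set.Icc 1 n := hσmap _ (by
    have := i.2; simp only [Set.mem_Icc]; omega)
  have hi2 : σ (i.1 + 2) ∈ Set.Icc 1 n := hσmap _ (by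
    have := i.2; simp only [Set.mem_Icc]; omega)
  simp only [petrieZ2, Matrix.mul_apply, Matrix.of_apply, Function.comp_apply]
  simp only [petrie_entry_xor, add_mul]
  rw [Finset.sum_add_distrib,
    z2_key n (σ (i.1 + 1)) (fun m => if ρ m ≤ j.1 + 1 then (1 : ZMod 2) else 0)
      hi1.1 hi1.2,
    z2_key n (σ (i.1 + 2)) (fun m => if ρ m ≤ j.1 + 1 then (1 : ZMod 2) else 0)
      hi2.1 hi2.2]
  linear_combination -1 * z2_add_self (if ρ n ≤ j.1 + 1 then (1 : ZMod 2) else 0)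
end

section
/- Let n ≥ 3 be an integer and let σ be a permutation of P_n. Then the determinant of the Petrie matrix M_σ of σ (over ℝ) equals 1 or −1; in particular M_σ is invertible. -/
open Matrix

/-!
Let `S` be the `n × n` matrix whose `i`-th row is the indicator of `{j | j < σ (i + 1)}`.
It is a row permutation of a unitriangular matrix, so `det S = sign σ`. Replacing every row
but the first by its difference with the previous one keeps the determinant; the new first
column is `(1, 0, …, 0)`, and the remaining block is `M_σ` with row `i` multiplied by the sign
of `σ (i + 2) - σ (i + 1)`. Hence `det M_σ = ± sign σ`.
-/

namespace Matrix

variable {m : ℕ}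

def stepMatrix (R : Type*) [Zero R] [One R] (f : Fin m → ℕ) : Matrix (Fin m) (Fin m) R :=
  of fun i j => if j.1 < f i then 1 else 0

def rowDiff {R ι : Type*} [Sub R] (A : Matrix (Fin (m + 1)) ι R) : Matrix (Fin (m + 1)) ι R :=
  of (Fin.cases (A 0) fun i => A i.succ - A i.castSucc)

section CommRing

variable {R : Type*} [CommRing R]

theorem det_rowDiff (A : Matrix (Fin (m + 1)) (Fin (m + 1)) R) : (rowDiff A).det = A.det :=
  (det_eq_of_forall_row_eq_smul_add_pred (A := A) (B := rowDiff A) (fun _ => 1) (fun _ => rfl)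
    (fun i j => by simp [rowDiff])).symm

theorem det_eq_det_submatrix_succ_of_col_zero (A : Matrix (Fin (m + 1)) (Fin (m + 1)) R)
    (h₀ : A 0 0 = 1) (hsucc : ∀ i : Fin m, A i.succ 0 = 0) :
    A.det = (A.submatrix Fin.succ Fin.succ).det := by
  rw [det_succ_column_zero, Fin.sum_univ_succ]
  simp [h₀, hsucc]

theorem det_stepMatrix_val_add_one : (stepMatrix R fun i : Fin m => i.1 + 1).det = 1 := by
  rw [det_of_isLowerTriangular (stepMatrix R fun i : Fin m => i.1 + 1)
    fun i j (hij : i < j) => if_neg (show ¬j.1 < i.1 + 1 by omega)]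
  simp [stepMatrix]

theorem det_stepMatrix_perm (e : Equiv.Perm (Fin m)) :
    (stepMatrix R fun i => (e i).1 + 1).det = Equiv.Perm.sign e := by
  rw [show (stepMatrix R fun i => (e i).1 + 1) = (stepMatrix R fun i => i.1 + 1).submatrix e id
    from rfl, det_permute, det_stepMatrix_val_add_one, mul_one]

theorem det_stepMatrix_eq_det_submatrix_rowDiff (f : Fin (m + 1) → ℕ) (hf : ∀ i, 0 < f i) :
    (stepMatrix R f).det = ((rowDiff (stepMatrix R f)).submatrix Fin.succ Fin.succ).det := by
  rw [← det_rowDiff]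
  apply det_eq_det_submatrix_succ_of_col_zero <;> simp [rowDiff, stepMatrix, hf]

end CommRing

end Matrix

theorem IsPermOn.exists_perm_fin {n : ℕ} {σ : ℕ → ℕ} (hσ : IsPermOn n σ) :
    ∃ e : Equiv.Perm (Fin n), ∀ i : Fin n, σ (i.1 + 1) = (e i).1 + 1 := by
  have hmem : ∀ i : Fin n, i.1 + 1 ∈ Set.Icc 1 n := fun i => Set.mem_Icc.2 ⟨by omega, i.2⟩
  have hval : ∀ i : Fin n, 1 ≤ σ (i.1 + 1) ∧ σ (i.1 + 1) ≤ n := fun i => hσ.mapsTo (hmem i)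
  let f : Fin n → Fin n := fun i => ⟨σ (i.1 + 1) - 1, by have := hval i; omega⟩
  have hf : f.Injective := fun i j hij => by
    have hi := hval i
    have hj := hval j
    have hij' : σ (i.1 + 1) - 1 = σ (j.1 + 1) - 1 := Fin.val_eq_of_eq hij
    have := hσ.injOn (hmem i) (hmem j) (by omega)
    exact Fin.ext (by omega)
  refine ⟨Equiv.ofBijective f hf.bijective_of_finite, fun i => ?_⟩
  have := hval i
  simp only [Equiv.ofBijective_apply, f]
  omega

def ascentSign (σ : ℕ → ℕ) (i : ℕ) : ℝ := if σ i < σ (i + 1) then 1 else -1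

theorem ascentSign_sq (σ : ℕ → ℕ) (i : ℕ) : ascentSign σ i ^ 2 = 1 := by
  unfold ascentSign
  split_ifs <;> norm_num

theorem submatrix_succ_rowDiff_stepMatrix {m : ℕ} (σ : ℕ → ℕ)
    (hne : ∀ i : Fin m, σ (i.1 + 1) ≠ σ (i.1 + 2)) :
    (rowDiff (stepMatrix ℝ fun i : Fin (m + 1) => σ (i.1 + 1))).submatrix Fin.succ Fin.succ =
      of fun i j : Fin m => ascentSign σ (i.1 + 1) * petrie (m + 1) σ i j := by
  ext i j
  simp only [submatrix_apply, rowDiff, stepMatrix, petrie, ascentSign, of_apply, Fin.cases_succ,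
    Pi.sub_apply, Fin.val_succ, Fin.val_castSucc]
  simp only [show i.1 + 1 + 1 = i.1 + 2 from rfl]
  rcases (hne i).lt_or_gt with h | h
  · rw [min_eq_left h.le, max_eq_right h.le]
    split_ifs <;> first | omega | norm_num
  · rw [min_eq_right h.le, max_eq_left h.le]
    split_ifs <;> first | omega | norm_num

theorem det_petrie_sq {m : ℕ} {σ : ℕ → ℕ} (hσ : IsPermOn (m + 1) σ) :
    (petrie (m + 1) σ).det ^ 2 = 1 := by
  obtain ⟨e, he⟩ := hσ.exists_perm_fin
  have hne : ∀ i : Fin m, σ (i.1 + 1) ≠ σ (i.1 + 2) := fun i h =>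
    absurd (hσ.injOn (Set.mem_Icc.2 ⟨by omega, by omega⟩) (Set.mem_Icc.2 ⟨by omega, by omega⟩) h)
      (by omega)
  have key : (Equiv.Perm.sign e : ℝ) =
      (∏ i : Fin m, ascentSign σ (i.1 + 1)) * (petrie (m + 1) σ).det := by
    calc (Equiv.Perm.sign e : ℝ) = (stepMatrix ℝ fun i : Fin (m + 1) => σ (i.1 + 1)).det := by
          simp_rw [he]; exact (det_stepMatrix_perm e).symm
      _ = _ := det_stepMatrix_eq_det_submatrix_rowDiff _ (by simp [he])
      _ = _ := by rw [submatrix_succ_rowDiff_stepMatrix σ hne, det_mul_column]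
  calc (petrie (m + 1) σ).det ^ 2
      = (∏ i : Fin m, ascentSign σ (i.1 + 1)) ^ 2 * (petrie (m + 1) σ).det ^ 2 := by
        simp [← Finset.prod_pow, ascentSign_sq]
    _ = (Equiv.Perm.sign e : ℝ) ^ 2 := by rw [key]; ring
    _ = 1 := by rw [← Int.cast_pow, ← Units.val_pow_eq_pow_val, Int.units_sq]; simp

theorem petrie_det_eq_one_or_neg_one_general (n : ℕ) (σ : ℕ → ℕ)
    (hσ : IsPermOn n σ) :
    ((petrie n σ).det = 1 ∨ (petrie n σ).det = -1) ∧ IsUnit (petrie n σ) := by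
  have hdet : (petrie n σ).det = 1 ∨ (petrie n σ).det = -1 := by
    rcases n with _ | m
    · -- `petrie 0 σ` is indexed by `Fin (0 - 1) = Fin 0`
      exact Or.inl (det_isEmpty (n := Fin 0))
    · exact sq_eq_one_iff.mp (det_petrie_sq hσ)
  refine ⟨hdet, (isUnit_iff_isUnit_det _).2 ?_⟩
  rcases hdet with h | h <;> simp [h]

/-- The determinant of the Petrie matrix of a permutation of `P_n` is `1` or `-1`;
in particular the Petrie matrix is invertible. -/
theorem petrie_det_eq_one_or_neg_one (n : ℕ) (hn : 3 ≤ n) (σ : ℕ → ℕ)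
    (hσ : IsPermOn n σ) :
    ((petrie n σ).det = 1 ∨ (petrie n σ).det = -1) ∧ IsUnit (petrie n σ) :=
  petrie_det_eq_one_or_neg_one_general n σ hσ
end

section
/- Let k ≥ 3 and let σ, ρ be permutations of P_k that are two-sided similar. Then for all integers m ≥ 1, n ≥ 1 and every synchronized two-sided extension (σ', ρ') of σ and ρ to P_{m+k+n}, the permutations σ' and ρ' are right similar, left similar, and two-sided similar. -/
open Matrix

lemma rightExt_lift (k m n n' : ℕ) (hk : 3 ≤ k) (hm : 1 ≤ m) (hn : 1 ≤ n)
    (σ σ' σ'' : ℕ → ℕ)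
    (h1 : IsTwoSidedExt k m n σ σ') (h2 : IsRightExt (m + k + n) n' σ' σ'') :
    IsTwoSidedExt k m (n + n') σ σ'' := by
  obtain ⟨hperm1, hmid, ⟨s, hs1, hsm, hσs, hsmall⟩, ⟨t, ht1, ht2, hσt, hbig⟩⟩ := h1
  obtain ⟨hperm2, heq, ⟨t', ht'1, ht'2, hσt', hbig'⟩⟩ := h2
  refine ⟨by rwa [show m + k + (n + n') = m + k + n + n' from by omega], ?_, ?_, ?_⟩
  · intro i hi2 hik
    rw [heq (m + i) (by omega) (by omega)]
    exact hmid i hi2 hik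
  · exact ⟨s, hs1, hsm, by rw [heq s (by omega) (by omega)]; exact hσs,
      fun i hi ha hb => by rw [heq i (by omega) (by omega)]; exact hsmall i hi ha hb⟩
  · by_cases hcase : t ≤ m + k + n - 1
    · refine ⟨t, by omega, by omega, by rw [heq t (by omega) (by omega)]; exact hσt, ?_⟩
      intro j hj hj1 hj2
      by_cases hj3 : j ≤ m + k + n - 1
      · rw [heq j (by omega) hj3]; exact hbig j hj hj1 (by omega)
      · by_cases hj4 : j = t'
        · subst hj4; rw [hσt']
          have := hbig (m + k + n) (by omega) (by omega) (by omega)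
          omega
        · have := hbig' j hj4 (by omega) (by omega); omega
    · have hteq : t = m + k + n := by omega
      refine ⟨t', by omega, by omega, by rw [hσt', ← hteq]; exact hσt, ?_⟩
      intro j hj hj1 hj2
      by_cases hj3 : j ≤ m + k + n - 1
      · rw [heq j (by omega) hj3]
        exact hbig j (by omega) hj1 (by omega)
      · have := hbig' j hj (by omega) (by omega); omega

lemma leftExt_lift (k m n m' : ℕ) (hk : 3 ≤ k) (hm : 1 ≤ m) (hn : 1 ≤ n)
    (σ σ' σ'' : ℕ → ℕ)
    (h1 : IsTwoSidedExt k m n σ σ') (h2 : IsLeftExt (m + k + n) m' σ' σ'') :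
    IsTwoSidedExt k (m' + m) n σ σ'' := by
  obtain ⟨hperm1, hmid, ⟨s, hs1, hsm, hσs, hsmall⟩, ⟨t, ht1, ht2, hσt, hbig⟩⟩ := h1
  obtain ⟨hperm2, heq, ⟨s', hs'1, hs'2, hσs', hsmall'⟩⟩ := h2
  refine ⟨by rwa [show m' + m + k + n = m' + (m + k + n) from by omega], ?_, ?_, ?_⟩
  · intro i hi2 hik
    rw [show m' + m + i = m' + (m + i) from by omega, heq (m + i) (by omega) (by omega),
      hmid i hi2 hik]
    omega
  · by_cases hcase : 2 ≤ s
    · refine ⟨m' + s, by omega, by omega, ?_, ?_⟩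
      · rw [heq s hcase (by omega), hσs]; omega
      · intro i hi hi1 hi2
        by_cases hi3 : i ≤ m' + 1
        · by_cases hi4 : i = s'
          · subst hi4; rw [hσs']
            have := hsmall 1 (by omega) (by omega) (by omega)
            omega
          · have := hsmall' i hi4 hi1 hi3; omega
        · rw [show i = m' + (i - m') from by omega, heq (i - m') (by omega) (by omega)]
          have := hsmall (i - m') (by omega) (by omega) (by omega)
          omega
    · have hs : s = 1 := by omega
      rw [hs] at hσs
      refine ⟨s', by omega, by omega, by rw [hσs', hσs]; omega, ?_⟩
      intro i hi hi1 hi2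
      by_cases hi3 : i ≤ m' + 1
      · have := hsmall' i hi hi1 hi3; omega
      · rw [show i = m' + (i - m') from by omega, heq (i - m') (by omega) (by omega)]
        have := hsmall (i - m') (by omega) (by omega) (by omega)
        omega
  · refine ⟨m' + t, by omega, by omega, ?_, ?_⟩
    · rw [heq t (by omega) (by omega), hσt]; omega
    · intro j hj hj1 hj2
      rw [show j = m' + (j - m') from by omega, heq (j - m') (by omega) (by omega)]
      have := hbig (j - m') (by omega) (by omega) (by omega)
      omega

lemma twoSidedExt_lift (k m n m' n' : ℕ) (hk : 3 ≤ k) (hm : 1 ≤ m) (hn : 1 ≤ n)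
    (σ σ' σ'' : ℕ → ℕ)
    (h1 : IsTwoSidedExt k m n σ σ') (h2 : IsTwoSidedExt (m + k + n) m' n' σ' σ'') :
    IsTwoSidedExt k (m' + m) (n + n') σ σ'' := by
  obtain ⟨hperm1, hmid, ⟨s, hs1, hsm, hσs, hsmall⟩, ⟨t, ht1, ht2, hσt, hbig⟩⟩ := h1
  obtain ⟨hperm2, heq, ⟨s', hs'1, hs'2, hσs', hsmall'⟩, ⟨t', ht'1, ht'2, hσt', hbig'⟩⟩ := h2
  refine ⟨by rwa [show m' + m + k + (n + n') = m' + (m + k + n) + n' from by omega], ?_, ?_, ?_⟩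
  · intro i hi2 hik
    rw [show m' + m + i = m' + (m + i) from by omega, heq (m + i) (by omega) (by omega),
      hmid i hi2 hik]
    omega
  · by_cases hcase : 2 ≤ s
    · refine ⟨m' + s, by omega, by omega, ?_, ?_⟩
      · rw [heq s hcase (by omega), hσs]; omega
      · intro i hi hi1 hi2
        by_cases hi3 : i ≤ m' + 1
        · by_cases hi4 : i = s'
          · subst hi4; rw [hσs']
            have := hsmall 1 (by omega) (by omega) (by omega)
            omega
          · have := hsmall' i hi4 hi1 hi3; omega
        · rw [show i = m' + (i - m') from by omega, heq (i - m') (by omega) (by omega)]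
          have := hsmall (i - m') (by omega) (by omega) (by omega)
          omega
    · have hs : s = 1 := by omega
      rw [hs] at hσs
      refine ⟨s', by omega, by omega, by rw [hσs', hσs]; omega, ?_⟩
      intro i hi hi1 hi2
      by_cases hi3 : i ≤ m' + 1
      · have := hsmall' i hi hi1 hi3; omega
      · rw [show i = m' + (i - m') from by omega, heq (i - m') (by omega) (by omega)]
        have := hsmall (i - m') (by omega) (by omega) (by omega)
        omega
  · by_cases hcase : t ≤ m + k + n - 1
    · refine ⟨m' + t, by omega, by omega, ?_, ?_⟩
      · rw [heq t (by omega) (by omega), hσt]; omega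
      · intro j hj hj1 hj2
        by_cases hj3 : j ≤ m' + (m + k + n) - 1
        · rw [show j = m' + (j - m') from by omega, heq (j - m') (by omega) (by omega)]
          have := hbig (j - m') (by omega) (by omega) (by omega)
          omega
        · by_cases hj4 : j = t'
          · subst hj4; rw [hσt']
            have := hbig (m + k + n) (by omega) (by omega) (by omega)
            omega
          · have := hbig' j hj4 (by omega) (by omega); omega
    · have hteq : t = m + k + n := by omega
      refine ⟨t', by omega, by omega, by rw [hσt', ← hteq, hσt]; omega, ?_⟩
      intro j hj hj1 hj2
      by_cases hj3 : j ≤ m' + (m + k + n) - 1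
      · rw [show j = m' + (j - m') from by omega, heq (j - m') (by omega) (by omega)]
        have := hbig (j - m') (by omega) (by omega) (by omega)
        omega
      · have := hbig' j hj (by omega) (by omega); omega

lemma sync_right_lift (k m n n' : ℕ) (hk : 3 ≤ k) (hm : 1 ≤ m) (hn : 1 ≤ n)
    (σ ρ σ' ρ' σ'' ρ'' : ℕ → ℕ)
    (h1 : IsSyncTwoSidedExt k m n σ ρ σ' ρ')
    (h2 : IsSyncRightExt (m + k + n) n' σ' ρ' σ'' ρ'') :
    IsSyncTwoSidedExt k m (n + n') σ ρ σ'' ρ'' := by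
  obtain ⟨hσe, hρe, s, t, hs1, hsm, ht1, ht2, hσs, hρs, hσt, hρt, hagree⟩ := h1
  obtain ⟨hσr, hρr, t', ht'1, ht'2, hσt', hρt', hagree'⟩ := h2
  have heqσ := hσr.2.1
  have heqρ := hρr.2.1
  refine ⟨rightExt_lift k m n n' hk hm hn σ σ' σ'' hσe hσr,
    rightExt_lift k m n n' hk hm hn ρ ρ' ρ'' hρe hρr, ?_⟩
  by_cases hcase : t ≤ m + k + n - 1
  · refine ⟨s, t, hs1, hsm, ht1, by omega,
      by rw [heqσ s (by omega) (by omega)]; exact hσs,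
      by rw [heqρ s (by omega) (by omega)]; exact hρs,
      by rw [heqσ t (by omega) (by omega)]; exact hσt,
      by rw [heqρ t (by omega) (by omega)]; exact hρt, ?_⟩
    intro i his hit hdom
    by_cases hiK : i ≤ m + k + n - 1
    · rw [heqσ i (by omega) hiK, heqρ i (by omega) hiK]
      exact hagree i his hit (by omega)
    · by_cases hit' : i = t'
      · subst hit'; rw [hσt', hρt']
        exact hagree (m + k + n) (by omega) (by omega) (by omega)
      · exact hagree' i hit' (by omega) (by omega)
  · have hteq : t = m + k + n := by omega
    refine ⟨s, t', hs1, hsm, by omega, by omega,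
      by rw [heqσ s (by omega) (by omega)]; exact hσs,
      by rw [heqρ s (by omega) (by omega)]; exact hρs,
      by rw [hσt', ← hteq]; exact hσt,
      by rw [hρt', ← hteq]; exact hρt, ?_⟩
    intro i his hit hdom
    by_cases hiK : i ≤ m + k + n - 1
    · rw [heqσ i (by omega) hiK, heqρ i (by omega) hiK]
      exact hagree i his (by omega) (by omega)
    · exact hagree' i hit (by omega) (by omega)

lemma sync_left_lift (k m n m' : ℕ) (hk : 3 ≤ k) (hm : 1 ≤ m) (hn : 1 ≤ n)
    (σ ρ σ' ρ' σ'' ρ'' : ℕ → ℕ)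
    (h1 : IsSyncTwoSidedExt k m n σ ρ σ' ρ')
    (h2 : IsSyncLeftExt (m + k + n) m' σ' ρ' σ'' ρ'') :
    IsSyncTwoSidedExt k (m' + m) n σ ρ σ'' ρ'' := by
  obtain ⟨hσe, hρe, s, t, hs1, hsm, ht1, ht2, hσs, hρs, hσt, hρt, hagree⟩ := h1
  obtain ⟨hσl, hρl, s', hs'1, hs'2, hσs', hρs', hagree'⟩ := h2
  have heqσ := hσl.2.1
  have heqρ := hρl.2.1
  refine ⟨leftExt_lift k m n m' hk hm hn σ σ' σ'' hσe hσl,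
    leftExt_lift k m n m' hk hm hn ρ ρ' ρ'' hρe hρl, ?_⟩
  by_cases hcase : 2 ≤ s
  · refine ⟨m' + s, m' + t, by omega, by omega, by omega, by omega,
      by rw [heqσ s hcase (by omega), hσs]; omega,
      by rw [heqρ s hcase (by omega), hρs]; omega,
      by rw [heqσ t (by omega) (by omega), hσt]; omega,
      by rw [heqρ t (by omega) (by omega), hρt]; omega, ?_⟩
    intro i his hit hdom
    by_cases hi3 : i ≤ m' + 1
    · by_cases hi4 : i = s'
      · subst hi4; rw [hσs', hρs']
        have := hagree 1 (by omega) (by omega) (by omega)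
        omega
      · exact hagree' i hi4 (by omega) hi3
    · rw [show i = m' + (i - m') from by omega, heqσ (i - m') (by omega) (by omega),
        heqρ (i - m') (by omega) (by omega)]
      have := hagree (i - m') (by omega) (by omega) (by omega)
      omega
  · have hs : s = 1 := by omega
    rw [hs] at hσs hρs
    refine ⟨s', m' + t, by omega, by omega, by omega, by omega,
      by rw [hσs', hσs]; omega,
      by rw [hρs', hρs]; omega,
      by rw [heqσ t (by omega) (by omega), hσt]; omega,
      by rw [heqρ t (by omega) (by omega), hρt]; omega, ?_⟩
    intro i his hit hdom
    by_cases hi3 : i ≤ m' + 1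
    · exact hagree' i his (by omega) hi3
    · rw [show i = m' + (i - m') from by omega, heqσ (i - m') (by omega) (by omega),
        heqρ (i - m') (by omega) (by omega)]
      have := hagree (i - m') (by omega) (by omega) (by omega)
      omega

lemma sync_two_lift (k m n m' n' : ℕ) (hk : 3 ≤ k) (hm : 1 ≤ m) (hn : 1 ≤ n)
    (σ ρ σ' ρ' σ'' ρ'' : ℕ → ℕ)
    (h1 : IsSyncTwoSidedExt k m n σ ρ σ' ρ')
    (h2 : IsSyncTwoSidedExt (m + k + n) m' n' σ' ρ' σ'' ρ'') :
    IsSyncTwoSidedExt k (m' + m) (n + n') σ ρ σ'' ρ'' := by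
  obtain ⟨hσe, hρe, s, t, hs1, hsm, ht1, ht2, hσs, hρs, hσt, hρt, hagree⟩ := h1
  obtain ⟨hσ2, hρ2, s', t', hs'1, hs'2, ht'1, ht'2, hσs', hρs', hσt', hρt', hagree'⟩ := h2
  have heqσ := hσ2.2.1
  have heqρ := hρ2.2.1
  refine ⟨twoSidedExt_lift k m n m' n' hk hm hn σ σ' σ'' hσe hσ2,
    twoSidedExt_lift k m n m' n' hk hm hn ρ ρ' ρ'' hρe hρ2, ?_⟩
  have hmidσ : ∀ i, 2 ≤ i → i ≤ m + k + n - 1 → σ'' (m' + i) = m' + σ' i := heqσ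
  have hmidρ : ∀ i, 2 ≤ i → i ≤ m + k + n - 1 → ρ'' (m' + i) = m' + ρ' i := heqρ
  -- choose s''
  have hsgoal : ∃ s'', 1 ≤ s'' ∧ s'' ≤ m' + m ∧ σ'' s'' = m' + m + σ 1 ∧
      ρ'' s'' = m' + m + ρ 1 ∧
      ∀ i, i ≠ s'' → 1 ≤ i → i ≤ m' + m + 1 → σ'' i = ρ'' i := by
    by_cases hcase : 2 ≤ s
    · refine ⟨m' + s, by omega, by omega,
        by rw [hmidσ s hcase (by omega), hσs]; omega,
        by rw [hmidρ s hcase (by omega), hρs]; omega, ?_⟩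
      intro i hi hi1 hi2
      by_cases hi3 : i ≤ m' + 1
      · by_cases hi4 : i = s'
        · subst hi4; rw [hσs', hρs']
          have := hagree 1 (by omega) (by omega) (by omega)
          omega
        · exact hagree' i hi4 (by omega) (by omega)
      · rw [show i = m' + (i - m') from by omega, hmidσ (i - m') (by omega) (by omega),
          hmidρ (i - m') (by omega) (by omega)]
        have := hagree (i - m') (by omega) (by omega) (by omega)
        omega
    · have hs : s = 1 := by omega
      rw [hs] at hσs hρs
      refine ⟨s', by omega, by omega,
        by rw [hσs', hσs]; omega,
        by rw [hρs', hρs]; omega, ?_⟩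
      intro i hi hi1 hi2
      by_cases hi3 : i ≤ m' + 1
      · exact hagree' i hi (by omega) (by omega)
      · rw [show i = m' + (i - m') from by omega, hmidσ (i - m') (by omega) (by omega),
          hmidρ (i - m') (by omega) (by omega)]
        have := hagree (i - m') (by omega) (by omega) (by omega)
        omega
  -- choose t''
  have htgoal : ∃ t'', m' + m + k + 1 ≤ t'' ∧ t'' ≤ m' + m + k + (n + n') ∧
      σ'' t'' = m' + m + σ k ∧ ρ'' t'' = m' + m + ρ k ∧
      ∀ i, i ≠ t'' → m' + m + k ≤ i → i ≤ m' + m + k + (n + n') → σ'' i = ρ'' i := by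
    by_cases hcase : t ≤ m + k + n - 1
    · refine ⟨m' + t, by omega, by omega,
        by rw [hmidσ t (by omega) (by omega), hσt]; omega,
        by rw [hmidρ t (by omega) (by omega), hρt]; omega, ?_⟩
      intro i hi hi1 hi2
      by_cases hi3 : i ≤ m' + (m + k + n) - 1
      · rw [show i = m' + (i - m') from by omega, hmidσ (i - m') (by omega) (by omega),
          hmidρ (i - m') (by omega) (by omega)]
        have := hagree (i - m') (by omega) (by omega) (by omega)
        omega
      · by_cases hi4 : i = t'
        · subst hi4; rw [hσt', hρt']
          have := hagree (m + k + n) (by omega) (by omega) (by omega)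
          omega
        · exact hagree' i (by omega) hi4 (by omega)
    · have hteq : t = m + k + n := by omega
      refine ⟨t', by omega, by omega,
        by rw [hσt', ← hteq, hσt]; omega,
        by rw [hρt', ← hteq, hρt]; omega, ?_⟩
      intro i hi hi1 hi2
      by_cases hi3 : i ≤ m' + (m + k + n) - 1
      · rw [show i = m' + (i - m') from by omega, hmidσ (i - m') (by omega) (by omega),
          hmidρ (i - m') (by omega) (by omega)]
        have := hagree (i - m') (by omega) (by omega) (by omega)
        omega
      · exact hagree' i (by omega) hi (by omega)
  obtain ⟨s'', hA, hB, hC, hD, hE⟩ := hsgoal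
  obtain ⟨t'', hF, hG, hH, hI, hJ⟩ := htgoal
  refine ⟨s'', t'', hA, hB, hF, hG, hC, hD, hH, hI, ?_⟩
  intro i his hit hdom
  rcases hdom with ⟨h1, h2⟩ | ⟨h1, h2⟩
  · exact hE i his h1 h2
  · exact hJ i hit h1 (by omega)

/-- Theorem 1(1). -/
theorem syncTwoSidedExt_of_twoSidedSimilar (k : ℕ) (hk : 3 ≤ k) (σ ρ : ℕ → ℕ)
    (hσ : IsPermOn k σ) (hρ : IsPermOn k ρ)
    (h : TwoSidedSimilar k σ ρ)
    (m n : ℕ) (hm : 1 ≤ m) (hn : 1 ≤ n)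
    (σ' ρ' : ℕ → ℕ) (hext : IsSyncTwoSidedExt k m n σ ρ σ' ρ') :
    RightSimilar (m + k + n) σ' ρ' ∧ LeftSimilar (m + k + n) σ' ρ' ∧
      TwoSidedSimilar (m + k + n) σ' ρ' := by
  refine ⟨?_, ?_, ?_⟩
  · intro n' hn' σ'' ρ'' hs
    have := h m (n + n') hm (by omega) σ'' ρ''
      (sync_right_lift k m n n' hk hm hn σ ρ σ' ρ' σ'' ρ'' hext hs)
    rwa [show m + k + (n + n') = m + k + n + n' from by omega] at this
  · intro m' hm' σ'' ρ'' hs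
    have := h (m' + m) n (by omega) hn σ'' ρ''
      (sync_left_lift k m n m' hk hm hn σ ρ σ' ρ' σ'' ρ'' hext hs)
    rwa [show m' + m + k + n = m' + (m + k + n) from by omega] at this
  · intro m' n' hm' hn' σ'' ρ'' hs
    have := h (m' + m) (n + n') (by omega) (by omega) σ'' ρ''
      (sync_two_lift k m n m' n' hk hm hn σ ρ σ' ρ' σ'' ρ'' hext hs)
    rwa [show m' + m + k + (n + n') = m' + (m + k + n) + n' from by omega] at this
end

section
/- Let k ≥ 3 and let σ, ρ be permutations of P_k that are two-sided similar. Then for every synchronized right extension (σ', ρ') of σ and ρ, the permutations σ' and ρ' are left similar and two-sided similar; and for every synchronized left extension (σ', ρ') of σ and ρ, the permutations σ' and ρ' are right similar and two-sided similar. -/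
open Matrix

/-- A right extension followed by a left extension is a two-sided extension. -/
lemma ext_A {k n m : ℕ} {σ σ' σ'' : ℕ → ℕ} (hk : 3 ≤ k)
    (h1 : IsRightExt k n σ σ') (h2 : IsLeftExt (k + n) m σ' σ'') :
    IsTwoSidedExt k m n σ σ'' := by
  obtain ⟨hperm1, hmid1, t, ht1, ht2, ht3, ht4⟩ := h1
  obtain ⟨hperm2, hmid2, s, hs1, hs2, hs3, hs4⟩ := h2
  refine ⟨?_, ?_, ⟨s, hs1, hs2, ?_, hs4⟩, ⟨m + t, by omega, by omega, ?_, ?_⟩⟩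
  · have e : m + k + n = m + (k + n) := by omega
    rw [e]; exact hperm2
  · intro i hi1 hi2
    rw [hmid2 i (by omega) (by omega), hmid1 i (by omega) hi2]
  · rw [hs3, hmid1 1 le_rfl (by omega)]
  · rw [hmid2 t (by omega) (by omega), ht3]
  · intro j hj hj1 hj2
    have hje : j = m + (j - m) := by omega
    rw [hje, hmid2 (j - m) (by omega) (by omega)]
    have h5 := ht4 (j - m) (by omega) (by omega) (by omega)
    omega

/-- A right extension followed by a two-sided extension is a two-sided extension. -/
lemma ext_A2 {k n m n₂ : ℕ} {σ σ' σ'' : ℕ → ℕ} (hk : 3 ≤ k)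
    (h1 : IsRightExt k n σ σ') (h2 : IsTwoSidedExt (k + n) m n₂ σ' σ'') :
    IsTwoSidedExt k m (n + n₂) σ σ'' := by
  obtain ⟨hperm1, hmid1, t₁, ht1, ht2, ht3, ht4⟩ := h1
  obtain ⟨hperm2, hmid2, ⟨s, hs1, hs2, hs3, hs4⟩, ⟨t₂, hu1, hu2, hu3, hu4⟩⟩ := h2
  refine ⟨?_, ?_, ⟨s, hs1, hs2, ?_, hs4⟩, ?_⟩
  · have e : m + k + (n + n₂) = m + (k + n) + n₂ := by omega
    rw [e]; exact hperm2
  · intro i hi1 hi2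
    rw [hmid2 i (by omega) (by omega), hmid1 i (by omega) hi2]
  · rw [hs3, hmid1 1 le_rfl (by omega)]
  · by_cases hc : t₁ ≤ k + n - 1
    · refine ⟨m + t₁, by omega, by omega, ?_, ?_⟩
      · rw [hmid2 t₁ (by omega) (by omega), ht3]
      · intro j hj hj1 hj2
        by_cases hj3 : j ≤ m + (k + n) - 1
        · have hje : j = m + (j - m) := by omega
          rw [hje, hmid2 (j - m) (by omega) (by omega)]
          have h5 := ht4 (j - m) (by omega) (by omega) (by omega)
          omega
        · by_cases hjt : j = t₂
          · have h5 := ht4 (k + n) (by omega) (by omega) le_rfl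
            rw [hjt, hu3]; omega
          · have h5 := hu4 j hjt (by omega) (by omega); omega
    · have ht₁ : t₁ = k + n := by omega
      refine ⟨t₂, by omega, by omega, ?_, ?_⟩
      · rw [ht₁] at ht3
        rw [hu3, ht3]
      · intro j hj hj1 hj2
        by_cases hj3 : j ≤ m + (k + n) - 1
        · have hje : j = m + (j - m) := by omega
          rw [hje, hmid2 (j - m) (by omega) (by omega)]
          have h5 := ht4 (j - m) (by omega) (by omega) (by omega)
          omega
        · have h5 := hu4 j hj (by omega) (by omega); omega

/-- A left extension followed by a right extension is a two-sided extension. -/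
lemma ext_B1 {k m n : ℕ} {σ σ' σ'' : ℕ → ℕ} (hk : 3 ≤ k)
    (h1 : IsLeftExt k m σ σ') (h2 : IsRightExt (m + k) n σ' σ'') :
    IsTwoSidedExt k m n σ σ'' := by
  obtain ⟨hperm1, hmid1, s, hs1, hs2, hs3, hs4⟩ := h1
  obtain ⟨hperm2, hmid2, t, ht1, ht2, ht3, ht4⟩ := h2
  refine ⟨hperm2, ?_, ⟨s, hs1, hs2, ?_, ?_⟩, ⟨t, ht1, ht2, ?_, ht4⟩⟩
  · intro i hi1 hi2
    rw [hmid2 (m + i) (by omega) (by omega), hmid1 i hi1 (by omega)]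
  · rw [hmid2 s (by omega) (by omega), hs3]
  · intro i hi hi1 hi2
    rw [hmid2 i (by omega) (by omega)]
    exact hs4 i hi hi1 hi2
  · rw [ht3, hmid1 k (by omega) le_rfl]

/-- A left extension followed by a two-sided extension is a two-sided extension. -/
lemma ext_B2 {k m m₂ n : ℕ} {σ σ' σ'' : ℕ → ℕ} (hk : 3 ≤ k)
    (h1 : IsLeftExt k m σ σ') (h2 : IsTwoSidedExt (m + k) m₂ n σ' σ'') :
    IsTwoSidedExt k (m₂ + m) n σ σ'' := by
  obtain ⟨hperm1, hmid1, s₁, hs1, hs2, hs3, hs4⟩ := h1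
  obtain ⟨hperm2, hmid2, ⟨s₂, hu1, hu2, hu3, hu4⟩, ⟨t, ht1, ht2, ht3, ht4⟩⟩ := h2
  refine ⟨?_, ?_, ?_, ⟨t, by omega, by omega, ?_, ?_⟩⟩
  · have e : m₂ + m + k + n = m₂ + (m + k) + n := by omega
    rw [e]; exact hperm2
  · intro i hi1 hi2
    have e : m₂ + m + i = m₂ + (m + i) := by omega
    rw [e, hmid2 (m + i) (by omega) (by omega), hmid1 i hi1 (by omega)]
    omega
  · by_cases hc : 2 ≤ s₁
    · refine ⟨m₂ + s₁, by omega, by omega, ?_, ?_⟩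
      · rw [hmid2 s₁ hc (by omega), hs3]; omega
      · intro i hi hi1 hi2
        by_cases hi3 : i ≤ m₂ + 1
        · by_cases hi4 : i = s₂
          · have h5 := hs4 1 (by omega) le_rfl (by omega)
            rw [hi4, hu3]; omega
          · have h5 := hu4 i hi4 hi1 hi3; omega
        · have hie : i = m₂ + (i - m₂) := by omega
          rw [hie, hmid2 (i - m₂) (by omega) (by omega)]
          have h5 := hs4 (i - m₂) (by omega) (by omega) (by omega)
          omega
    · have hs₁ : s₁ = 1 := by omega
      rw [hs₁] at hs3
      refine ⟨s₂, hu1, by omega, ?_, ?_⟩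
      · rw [hu3, hs3]; omega
      · intro i hi hi1 hi2
        by_cases hi3 : i ≤ m₂ + 1
        · have h5 := hu4 i hi hi1 hi3; omega
        · have hie : i = m₂ + (i - m₂) := by omega
          rw [hie, hmid2 (i - m₂) (by omega) (by omega)]
          have h5 := hs4 (i - m₂) (by omega) (by omega) (by omega)
          omega
  · rw [ht3, hmid1 k (by omega) le_rfl]; omega
  · intro j hj hj1 hj2
    have h5 := ht4 j hj (by omega) (by omega); omega

lemma sync_A {k n m : ℕ} {σ ρ σ' ρ' σ'' ρ'' : ℕ → ℕ} (hk : 3 ≤ k)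
    (h1 : IsSyncRightExt k n σ ρ σ' ρ')
    (h2 : IsSyncLeftExt (k + n) m σ' ρ' σ'' ρ'') :
    IsSyncTwoSidedExt k m n σ ρ σ'' ρ'' := by
  obtain ⟨hr1, hr2, t, ht1, ht2, ht3, ht4, ht5⟩ := h1
  obtain ⟨hl1, hl2, s, hs1, hs2, hs3, hs4, hs5⟩ := h2
  refine ⟨ext_A hk hr1 hl1, ext_A hk hr2 hl2, s, m + t, hs1, hs2, by omega, by omega,
    ?_, ?_, ?_, ?_, ?_⟩
  · rw [hs3, hr1.2.1 1 le_rfl (by omega)]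
  · rw [hs4, hr2.2.1 1 le_rfl (by omega)]
  · rw [hl1.2.1 t (by omega) (by omega), ht3]
  · rw [hl2.2.1 t (by omega) (by omega), ht4]
  · intro i his hit hdom
    rcases hdom with ⟨ha, hb⟩ | ⟨ha, hb⟩
    · exact hs5 i his ha hb
    · have hie : i = m + (i - m) := by omega
      rw [hie, hl1.2.1 (i - m) (by omega) (by omega), hl2.2.1 (i - m) (by omega) (by omega),
        ht5 (i - m) (by omega) (by omega) (by omega)]

lemma sync_A2 {k n m n₂ : ℕ} {σ ρ σ' ρ' σ'' ρ'' : ℕ → ℕ} (hk : 3 ≤ k)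
    (h1 : IsSyncRightExt k n σ ρ σ' ρ')
    (h2 : IsSyncTwoSidedExt (k + n) m n₂ σ' ρ' σ'' ρ'') :
    IsSyncTwoSidedExt k m (n + n₂) σ ρ σ'' ρ'' := by
  obtain ⟨hr1, hr2, t₁, ht1, ht2, ht3, ht4, ht5⟩ := h1
  obtain ⟨hl1, hl2, s, t₂, hs1, hs2, hu1, hu2, hs3, hs4, hu3, hu4, hsync⟩ := h2
  refine ⟨ext_A2 hk hr1 hl1, ext_A2 hk hr2 hl2, s, ?_⟩
  by_cases hc : t₁ ≤ k + n - 1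
  · refine ⟨m + t₁, hs1, hs2, by omega, by omega, ?_, ?_, ?_, ?_, ?_⟩
    · rw [hs3, hr1.2.1 1 le_rfl (by omega)]
    · rw [hs4, hr2.2.1 1 le_rfl (by omega)]
    · rw [hl1.2.1 t₁ (by omega) (by omega), ht3]
    · rw [hl2.2.1 t₁ (by omega) (by omega), ht4]
    · intro i his hit hdom
      rcases hdom with ⟨ha, hb⟩ | ⟨ha, hb⟩
      · exact hsync i his (by omega) (Or.inl ⟨ha, hb⟩)
      · by_cases hd : i ≤ m + (k + n) - 1
        · have hie : i = m + (i - m) := by omega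
          rw [hie, hl1.2.1 (i - m) (by omega) (by omega),
            hl2.2.1 (i - m) (by omega) (by omega),
            ht5 (i - m) (by omega) (by omega) (by omega)]
        · by_cases he : i = t₂
          · rw [he, hu3, hu4, ht5 (k + n) (by omega) (by omega) le_rfl]
          · exact hsync i his he (Or.inr ⟨by omega, by omega⟩)
  · have ht₁ : t₁ = k + n := by omega
    rw [ht₁] at ht3 ht4
    refine ⟨t₂, hs1, hs2, by omega, by omega, ?_, ?_, ?_, ?_, ?_⟩
    · rw [hs3, hr1.2.1 1 le_rfl (by omega)]
    · rw [hs4, hr2.2.1 1 le_rfl (by omega)]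
    · rw [hu3, ht3]
    · rw [hu4, ht4]
    · intro i his hit hdom
      rcases hdom with ⟨ha, hb⟩ | ⟨ha, hb⟩
      · exact hsync i his (by omega) (Or.inl ⟨ha, hb⟩)
      · by_cases hd : i ≤ m + (k + n) - 1
        · have hie : i = m + (i - m) := by omega
          rw [hie, hl1.2.1 (i - m) (by omega) (by omega),
            hl2.2.1 (i - m) (by omega) (by omega),
            ht5 (i - m) (by omega) (by omega) (by omega)]
        · exact hsync i his hit (Or.inr ⟨by omega, by omega⟩)

lemma sync_B1 {k m n : ℕ} {σ ρ σ' ρ' σ'' ρ'' : ℕ → ℕ} (hk : 3 ≤ k)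
    (h1 : IsSyncLeftExt k m σ ρ σ' ρ')
    (h2 : IsSyncRightExt (m + k) n σ' ρ' σ'' ρ'') :
    IsSyncTwoSidedExt k m n σ ρ σ'' ρ'' := by
  obtain ⟨hl1, hl2, s, hs1, hs2, hs3, hs4, hs5⟩ := h1
  obtain ⟨hr1, hr2, t, ht1, ht2, ht3, ht4, ht5⟩ := h2
  refine ⟨ext_B1 hk hl1 hr1, ext_B1 hk hl2 hr2, s, t, hs1, hs2, ht1, ht2,
    ?_, ?_, ?_, ?_, ?_⟩
  · rw [hr1.2.1 s (by omega) (by omega), hs3]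
  · rw [hr2.2.1 s (by omega) (by omega), hs4]
  · rw [ht3, hl1.2.1 k (by omega) le_rfl]
  · rw [ht4, hl2.2.1 k (by omega) le_rfl]
  · intro i his hit hdom
    rcases hdom with ⟨ha, hb⟩ | ⟨ha, hb⟩
    · rw [hr1.2.1 i ha (by omega), hr2.2.1 i ha (by omega), hs5 i his ha hb]
    · exact ht5 i hit ha hb

lemma sync_B2 {k m m₂ n : ℕ} {σ ρ σ' ρ' σ'' ρ'' : ℕ → ℕ} (hk : 3 ≤ k)
    (h1 : IsSyncLeftExt k m σ ρ σ' ρ')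
    (h2 : IsSyncTwoSidedExt (m + k) m₂ n σ' ρ' σ'' ρ'') :
    IsSyncTwoSidedExt k (m₂ + m) n σ ρ σ'' ρ'' := by
  obtain ⟨hl1, hl2, s₁, hs1, hs2, hs3, hs4, hs5⟩ := h1
  obtain ⟨ht1', ht2', s₂, t, hu1, hu2, hv1, hv2, hu3, hu4, hv3, hv4, hsync⟩ := h2
  refine ⟨ext_B2 hk hl1 ht1', ext_B2 hk hl2 ht2', ?_⟩
  by_cases hc : 2 ≤ s₁
  · refine ⟨m₂ + s₁, t, by omega, by omega, by omega, by omega, ?_, ?_, ?_, ?_, ?_⟩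
    · rw [ht1'.2.1 s₁ hc (by omega), hs3]; omega
    · rw [ht2'.2.1 s₁ hc (by omega), hs4]; omega
    · rw [hv3, hl1.2.1 k (by omega) le_rfl]; omega
    · rw [hv4, hl2.2.1 k (by omega) le_rfl]; omega
    · intro i his hit hdom
      rcases hdom with ⟨ha, hb⟩ | ⟨ha, hb⟩
      · by_cases hd : i ≤ m₂ + 1
        · by_cases he : i = s₂
          · rw [he, hu3, hu4, hs5 1 (by omega) le_rfl (by omega)]
          · exact hsync i he hit (Or.inl ⟨ha, hd⟩)
        · have hie : i = m₂ + (i - m₂) := by omega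
          rw [hie, ht1'.2.1 (i - m₂) (by omega) (by omega),
            ht2'.2.1 (i - m₂) (by omega) (by omega),
            hs5 (i - m₂) (by omega) (by omega) (by omega)]
      · exact hsync i (by omega) hit (Or.inr ⟨by omega, by omega⟩)
  · have hs₁ : s₁ = 1 := by omega
    rw [hs₁] at hs3 hs4
    refine ⟨s₂, t, hu1, by omega, by omega, by omega, ?_, ?_, ?_, ?_, ?_⟩
    · rw [hu3, hs3]; omega
    · rw [hu4, hs4]; omega
    · rw [hv3, hl1.2.1 k (by omega) le_rfl]; omega
    · rw [hv4, hl2.2.1 k (by omega) le_rfl]; omega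
    · intro i his hit hdom
      rcases hdom with ⟨ha, hb⟩ | ⟨ha, hb⟩
      · by_cases hd : i ≤ m₂ + 1
        · exact hsync i his hit (Or.inl ⟨ha, hd⟩)
        · have hie : i = m₂ + (i - m₂) := by omega
          rw [hie, ht1'.2.1 (i - m₂) (by omega) (by omega),
            ht2'.2.1 (i - m₂) (by omega) (by omega),
            hs5 (i - m₂) (by omega) (by omega) (by omega)]
      · exact hsync i (by omega) hit (Or.inr ⟨by omega, by omega⟩)

/-- Theorem 1(2). -/
theorem syncOneSidedExt_of_twoSidedSimilar (k : ℕ) (hk : 3 ≤ k) (σ ρ : ℕ → ℕ)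
    (hσ : IsPermOn k σ) (hρ : IsPermOn k ρ)
    (h : TwoSidedSimilar k σ ρ) :
    (∀ n, 1 ≤ n → ∀ σ' ρ' : ℕ → ℕ, IsSyncRightExt k n σ ρ σ' ρ' →
      LeftSimilar (k + n) σ' ρ' ∧ TwoSidedSimilar (k + n) σ' ρ') ∧
    (∀ m, 1 ≤ m → ∀ σ' ρ' : ℕ → ℕ, IsSyncLeftExt k m σ ρ σ' ρ' →
      RightSimilar (m + k) σ' ρ' ∧ TwoSidedSimilar (m + k) σ' ρ') := by
  constructor
  · intro n hn σ' ρ' hsync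
    constructor
    · intro m hm σ'' ρ'' hsync2
      have H := h m n hm hn σ'' ρ'' (sync_A hk hsync hsync2)
      have e : m + k + n = m + (k + n) := by omega
      rwa [e] at H
    · intro m n₂ hm hn₂ σ'' ρ'' hsync2
      have H := h m (n + n₂) hm (by omega) σ'' ρ'' (sync_A2 hk hsync hsync2)
      have e : m + k + (n + n₂) = m + (k + n) + n₂ := by omega
      rwa [e] at H
  · intro m hm σ' ρ' hsync
    constructor
    · intro n hn σ'' ρ'' hsync2
      exact h m n hm hn σ'' ρ'' (sync_B1 hk hsync hsync2)
    · intro m₂ n hm₂ hn σ'' ρ'' hsync2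
      have H := h (m₂ + m) n (by omega) hn σ'' ρ'' (sync_B2 hk hsync hsync2)
      have e : m₂ + m + k + n = m₂ + (m + k) + n := by omega
      rwa [e] at H
end

section
/- Let k ≥ 3 and let σ, ρ be permutations of P_k. If σ and ρ are right similar, then for every synchronized right extension (σ', ρ') of σ and ρ, the permutations σ' and ρ' are right similar. Likewise, if σ and ρ are left similar, then for every synchronized left extension (σ', ρ') of σ and ρ, the permutations σ' and ρ' are left similar. -/
open Matrix

lemma rightExt_trans {k n n' : ℕ} (hk : 1 ≤ k) {σ σ' σ'' : ℕ → ℕ}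
    (h1 : IsRightExt k n σ σ') (h2 : IsRightExt (k + n) n' σ' σ'') :
    IsRightExt k (n + n') σ σ'' := by
  obtain ⟨hp1, heq1, t1, ht1a, ht1b, ht1c, ht1d⟩ := h1
  obtain ⟨hp2, heq2, t2, ht2a, ht2b, ht2c, ht2d⟩ := h2
  refine ⟨by rwa [show k + (n + n') = k + n + n' by omega], ?_, ?_⟩
  · intro i hi1 hi2
    rw [heq2 i hi1 (by omega), heq1 i hi1 hi2]
  · by_cases hc : t1 = k + n
    · refine ⟨t2, by omega, by omega, ?_, ?_⟩
      · rw [ht2c, ← hc, ht1c]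
      · intro j hj hj1 hj2
        by_cases hj3 : j ≤ k + n - 1
        · rw [heq2 j (by omega) hj3]
          exact ht1d j (by omega) hj1 (by omega)
        · have := ht2d j hj (by omega) (by omega)
          omega
    · refine ⟨t1, ht1a, by omega, ?_, ?_⟩
      · rw [heq2 t1 (by omega) (by omega), ht1c]
      · intro j hj hj1 hj2
        by_cases hj3 : j ≤ k + n - 1
        · rw [heq2 j (by omega) hj3]
          exact ht1d j hj hj1 (by omega)
        · by_cases hj4 : j = t2
          · subst hj4
            rw [ht2c]
            exact ht1d (k + n) (by omega) (by omega) (by omega)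
          · have := ht2d j hj4 (by omega) (by omega)
            omega

lemma syncRightExt_trans {k n n' : ℕ} (hk : 1 ≤ k) {σ ρ σ' ρ' σ'' ρ'' : ℕ → ℕ}
    (h1 : IsSyncRightExt k n σ ρ σ' ρ') (h2 : IsSyncRightExt (k + n) n' σ' ρ' σ'' ρ'') :
    IsSyncRightExt k (n + n') σ ρ σ'' ρ'' := by
  obtain ⟨he1σ, he1ρ, t1, ht1a, ht1b, hs1, hr1, hagree1⟩ := h1
  obtain ⟨he2σ, he2ρ, t2, ht2a, ht2b, hs2, hr2, hagree2⟩ := h2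
  have hσeq := he2σ.2.1
  have hρeq := he2ρ.2.1
  refine ⟨rightExt_trans hk he1σ he2σ, rightExt_trans hk he1ρ he2ρ, ?_⟩
  by_cases hc : t1 = k + n
  · refine ⟨t2, by omega, by omega, ?_, ?_, ?_⟩
    · rw [hs2, ← hc, hs1]
    · rw [hr2, ← hc, hr1]
    · intro i hi hi1 hi2
      by_cases hi3 : i ≤ k + n - 1
      · rw [hσeq i (by omega) hi3, hρeq i (by omega) hi3]
        exact hagree1 i (by omega) hi1 (by omega)
      · exact hagree2 i hi (by omega) (by omega)
  · refine ⟨t1, ht1a, by omega, ?_, ?_, ?_⟩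
    · rw [hσeq t1 (by omega) (by omega), hs1]
    · rw [hρeq t1 (by omega) (by omega), hr1]
    · intro i hi hi1 hi2
      by_cases hi3 : i ≤ k + n - 1
      · rw [hσeq i (by omega) hi3, hρeq i (by omega) hi3]
        exact hagree1 i hi hi1 (by omega)
      · by_cases hi4 : i = t2
        · subst hi4
          rw [hs2, hr2]
          exact hagree1 (k + n) (by omega) (by omega) (by omega)
        · exact hagree2 i hi4 (by omega) (by omega)

lemma leftExt_trans {k m m' : ℕ} (hk : 1 ≤ k) {σ σ' σ'' : ℕ → ℕ}
    (h1 : IsLeftExt k m σ σ') (h2 : IsLeftExt (m + k) m' σ' σ'') :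
    IsLeftExt k (m' + m) σ σ'' := by
  obtain ⟨hp1, heq1, s1, hs1a, hs1b, hs1c, hs1d⟩ := h1
  obtain ⟨hp2, heq2, s2, hs2a, hs2b, hs2c, hs2d⟩ := h2
  refine ⟨by rwa [show m' + m + k = m' + (m + k) by omega], ?_, ?_⟩
  · intro i hi1 hi2
    have h5 : σ'' (m' + (m + i)) = m' + σ' (m + i) := heq2 (m + i) (by omega) (by omega)
    rw [show m' + m + i = m' + (m + i) by omega, h5, heq1 i hi1 hi2]
    omega
  · by_cases hc : s1 = 1
    · subst hc
      refine ⟨s2, hs2a, by omega, ?_, ?_⟩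
      · rw [hs2c, hs1c]
        omega
      · intro j hj hj1 hj2
        by_cases hj3 : j ≤ m' + 1
        · have := hs2d j hj hj1 hj3
          omega
        · have h5 : σ'' (m' + (j - m')) = m' + σ' (j - m') := heq2 (j - m') (by omega) (by omega)
          rw [show j = m' + (j - m') by omega, h5]
          have := hs1d (j - m') (by omega) (by omega) (by omega)
          omega
    · refine ⟨m' + s1, by omega, by omega, ?_, ?_⟩
      · rw [heq2 s1 (by omega) (by omega), hs1c]
        omega
      · intro j hj hj1 hj2
        by_cases hj3 : j ≤ m' + 1
        · by_cases hj4 : j = s2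
          · subst hj4
            rw [hs2c]
            have := hs1d 1 (by omega) (by omega) (by omega)
            omega
          · have := hs2d j hj4 hj1 hj3
            omega
        · have h5 : σ'' (m' + (j - m')) = m' + σ' (j - m') := heq2 (j - m') (by omega) (by omega)
          rw [show j = m' + (j - m') by omega, h5]
          have := hs1d (j - m') (by omega) (by omega) (by omega)
          omega

lemma syncLeftExt_trans {k m m' : ℕ} (hk : 1 ≤ k) {σ ρ σ' ρ' σ'' ρ'' : ℕ → ℕ}
    (h1 : IsSyncLeftExt k m σ ρ σ' ρ') (h2 : IsSyncLeftExt (m + k) m' σ' ρ' σ'' ρ'') :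
    IsSyncLeftExt k (m' + m) σ ρ σ'' ρ'' := by
  obtain ⟨he1σ, he1ρ, s1, hs1a, hs1b, hs1s, hs1r, hagree1⟩ := h1
  obtain ⟨he2σ, he2ρ, s2, hs2a, hs2b, hs2s, hs2r, hagree2⟩ := h2
  have hσeq := he2σ.2.1
  have hρeq := he2ρ.2.1
  refine ⟨leftExt_trans hk he1σ he2σ, leftExt_trans hk he1ρ he2ρ, ?_⟩
  by_cases hc : s1 = 1
  · subst hc
    refine ⟨s2, hs2a, by omega, ?_, ?_, ?_⟩
    · rw [hs2s, hs1s]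
      omega
    · rw [hs2r, hs1r]
      omega
    · intro i hi hi1 hi2
      by_cases hi3 : i ≤ m' + 1
      · exact hagree2 i hi hi1 hi3
      · rw [show i = m' + (i - m') by omega,
          hσeq (i - m') (by omega) (by omega), hρeq (i - m') (by omega) (by omega),
          hagree1 (i - m') (by omega) (by omega) (by omega)]
  · refine ⟨m' + s1, by omega, by omega, ?_, ?_, ?_⟩
    · rw [hσeq s1 (by omega) (by omega), hs1s]
      omega
    · rw [hρeq s1 (by omega) (by omega), hs1r]
      omega
    · intro i hi hi1 hi2
      by_cases hi3 : i ≤ m' + 1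
      · by_cases hi4 : i = s2
        · subst hi4
          rw [hs2s, hs2r, hagree1 1 (by omega) (by omega) (by omega)]
        · exact hagree2 i hi4 hi1 hi3
      · rw [show i = m' + (i - m') by omega,
          hσeq (i - m') (by omega) (by omega), hρeq (i - m') (by omega) (by omega),
          hagree1 (i - m') (by omega) (by omega) (by omega)]

/-- Theorem 2. -/
theorem syncExt_preserves_oneSidedSimilar (k : ℕ) (hk : 3 ≤ k) (σ ρ : ℕ → ℕ)
    (hσ : IsPermOn k σ) (hρ : IsPermOn k ρ) :
    (RightSimilar k σ ρ → ∀ n, 1 ≤ n → ∀ σ' ρ' : ℕ → ℕ,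
      IsSyncRightExt k n σ ρ σ' ρ' → RightSimilar (k + n) σ' ρ') ∧
    (LeftSimilar k σ ρ → ∀ m, 1 ≤ m → ∀ σ' ρ' : ℕ → ℕ,
      IsSyncLeftExt k m σ ρ σ' ρ' → LeftSimilar (m + k) σ' ρ') := by
  constructor
  · intro hRS n hn σ' ρ' hsync n' hn' σ'' ρ'' hsync2
    have h := hRS (n + n') (by omega) σ'' ρ'' (syncRightExt_trans (by omega) hsync hsync2)
    rwa [show k + (n + n') = k + n + n' by omega] at h
  · intro hLS m hm σ' ρ' hsync m' hm' σ'' ρ'' hsync2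
    have h := hLS (m' + m) (by omega) σ'' ρ'' (syncLeftExt_trans (by omega) hsync hsync2)
    rwa [show m' + m + k = m' + (m + k) by omega] at h
end

section
/- Let k ≥ 3 and let σ, ρ be permutations of P_k. If σ and ρ are right similar, then the dual permutations σ* and ρ* are left similar; if σ and ρ are left similar, then σ* and ρ* are right similar; and if σ and ρ are two-sided similar, then σ* and ρ* are two-sided similar. -/
open Matrix

/-- The dual permutation `θ*` of a permutation `θ` of `P_k`: `θ*(i) = k+1 - θ(k+1-i)`. -/
def dualPerm (k : ℕ) (θ : ℕ → ℕ) : ℕ → ℕ := fun i => k + 1 - θ (k + 1 - i)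

/-!
Reversing positions and values, `i ↦ N + 1 - i`, turns a left extension of `σ*` into a right
extension of `σ`, a right extension into a left one, and a two-sided extension with margins
`(m, n)` into one with margins `(n, m)`; it also preserves synchronization. On Petrie matrices
it reverses the order of both rows and columns, i.e. it conjugates by the reversal permutation
matrix. Hence `M_τ` is similar to `M_{τ*}`, and similarity of the Petrie matrices of the dual
pair of extensions transfers to the original pair.
-/

section Similarity

variable {m : Type*} [Fintype m] [DecidableEq m]

theorem matSimilar_iff_isConj {A B : Matrix m m ℝ} : MatSimilar A B ↔ IsConj A B := by
  constructor
  · rintro ⟨P, hP, rfl⟩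
    refine ⟨hP.unit, ?_⟩
    have hP' : P⁻¹ * P = 1 := Matrix.nonsing_inv_mul P ((Matrix.isUnit_iff_isUnit_det P).1 hP)
    simp only [SemiconjBy, IsUnit.unit_spec, Matrix.mul_assoc, hP', Matrix.mul_one]
  · rintro ⟨u, hu⟩
    refine ⟨u, u.isUnit, ?_⟩
    rw [← Matrix.coe_units_inv, hu.eq, Matrix.mul_assoc, Units.mul_inv, Matrix.mul_one]

theorem Matrix.isConj_submatrix_perm {R : Type*} [CommRing R] (A : Matrix m m R)
    (e : Equiv.Perm m) : IsConj A (A.submatrix e e) := by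
  have hP : IsUnit (e.permMatrix R) := by
    rw [Matrix.isUnit_iff_isUnit_det, Matrix.det_permutation]
    exact (Equiv.Perm.sign e).isUnit.map (Int.castRingHom R)
  refine ⟨hP.unit, ?_⟩
  simp only [SemiconjBy, IsUnit.unit_spec, PEquiv.toMatrix_toPEquiv_mul,
    PEquiv.mul_toMatrix_toPEquiv, Matrix.submatrix_submatrix]
  simp

end Similarity

theorem IsPermOn.apply_le {n : ℕ} {θ : ℕ → ℕ} (h : IsPermOn n θ) {i : ℕ} (hi : 1 ≤ i)
    (hin : i ≤ n) : θ i ≤ n :=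
  (h.mapsTo ⟨hi, hin⟩).2

theorem dualPerm_apply_rev (N : ℕ) (θ : ℕ → ℕ) {x : ℕ} (hx : x ≤ N + 1) :
    dualPerm N θ (N + 1 - x) = N + 1 - θ x := by
  rw [dualPerm, Nat.sub_sub_self hx]

theorem dualPerm_apply_one (k : ℕ) (θ : ℕ → ℕ) : dualPerm k θ 1 = k + 1 - θ k := by
  simp [dualPerm]

theorem dualPerm_apply_self (k : ℕ) (θ : ℕ → ℕ) : dualPerm k θ k = k + 1 - θ 1 := by
  simp [dualPerm]

theorem IsPermOn.dualPerm {n : ℕ} {θ : ℕ → ℕ} (h : IsPermOn n θ) :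
    IsPermOn n (dualPerm n θ) := by
  have hrev : Set.BijOn (fun i => n + 1 - i) (Set.Icc 1 n) (Set.Icc 1 n) := by
    refine Set.InvOn.bijOn (f' := fun i => n + 1 - i) ⟨?_, ?_⟩ ?_ ?_ <;>
      intro x hx <;> simp only [Set.mem_Icc] at hx ⊢ <;> omega
  exact hrev.comp (h.comp hrev)

theorem petrie_dualPerm {n : ℕ} {θ : ℕ → ℕ} (h : IsPermOn n θ) :
    petrie n (dualPerm n θ) = (petrie n θ).submatrix Fin.rev Fin.rev := by
  ext ⟨i, hi⟩ ⟨j, hj⟩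
  have ha := h.apply_le (i := n - 1 - i) (by omega) (by omega)
  have hb := h.apply_le (i := n - i) (by omega) (by omega)
  simp only [petrie, Matrix.submatrix_apply, Matrix.of_apply, Fin.val_rev, dualPerm]
  simp only [show n + 1 - (i + 1) = n - i by omega, show n + 1 - (i + 2) = n - 1 - i by omega,
    show n - 1 - (i + 1) + 1 = n - 1 - i by omega, show n - 1 - (i + 1) + 2 = n - i by omega]
  exact if_congr (by omega) rfl rfl

theorem isConj_petrie_dualPerm {n : ℕ} {θ : ℕ → ℕ} (h : IsPermOn n θ) :
    IsConj (petrie n θ) (petrie n (dualPerm n θ)) := by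
  rw [petrie_dualPerm h]
  exact (petrie n θ).isConj_submatrix_perm Fin.revPerm

section Extensions

variable {k : ℕ} {σ τ : ℕ → ℕ}

theorem IsLeftExt.dualPerm {m : ℕ} (hk : 1 ≤ k) (hσ : IsPermOn k σ)
    (h : IsLeftExt k m (dualPerm k σ) τ) : IsRightExt k m σ (dualPerm (m + k) τ) := by
  obtain ⟨hτ, hmid, s, hs1, hsm, hτs, hτlt⟩ := h
  refine ⟨by rw [add_comm]; exact hτ.dualPerm, ?_, m + k + 1 - s, by omega, by omega, ?_, ?_⟩
  · intro i hi hik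
    have hτi := hmid (k + 1 - i) (by omega) (by omega)
    rw [dualPerm_apply_rev k σ (by omega)] at hτi
    have := hσ.apply_le hi (by omega)
    rw [_root_.dualPerm, show m + k + 1 - i = m + (k + 1 - i) by omega, hτi]
    omega
  · have := hσ.apply_le hk le_rfl
    rw [dualPerm_apply_rev _ _ (by omega), hτs, dualPerm_apply_one]
    omega
  · intro j hjt hkj hjm
    have := hτlt (m + k + 1 - j) (by omega) (by omega) (by omega)
    simp only [_root_.dualPerm]
    omega

theorem IsRightExt.dualPerm {n : ℕ} (hk : 1 ≤ k) (hσ : IsPermOn k σ)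
    (h : IsRightExt k n (dualPerm k σ) τ) : IsLeftExt k n σ (dualPerm (k + n) τ) := by
  obtain ⟨hτ, hmid, t, hkt, htn, hτt, hτgt⟩ := h
  refine ⟨by rw [add_comm]; exact hτ.dualPerm, ?_, k + n + 1 - t, by omega, by omega, ?_, ?_⟩
  · intro i hi hik
    have hτi := hmid (k + 1 - i) (by omega) (by omega)
    rw [dualPerm_apply_rev k σ (by omega)] at hτi
    have := hσ.apply_le (by omega) hik
    rw [_root_.dualPerm, show k + n + 1 - (n + i) = k + 1 - i by omega, hτi]
    omega
  · have := hσ.apply_le le_rfl hk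
    rw [dualPerm_apply_rev _ _ (by omega), hτt, dualPerm_apply_self]
    omega
  · intro j hjs hj hjn
    have := hτgt (k + n + 1 - j) (by omega) (by omega) (by omega)
    simp only [_root_.dualPerm]
    omega

theorem IsTwoSidedExt.dualPerm {m n : ℕ} (hk : 1 ≤ k) (hσ : IsPermOn k σ)
    (h : IsTwoSidedExt k m n (dualPerm k σ) τ) :
    IsTwoSidedExt k n m σ (dualPerm (m + k + n) τ) := by
  obtain ⟨hτ, hmid, ⟨s, hs1, hsm, hτs, hτlt⟩, ⟨t, hkt, htn, hτt, hτgt⟩⟩ := h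
  refine ⟨by rw [show n + k + m = m + k + n by omega]; exact hτ.dualPerm, ?_,
    ⟨m + k + n + 1 - t, by omega, by omega, ?_, ?_⟩,
    ⟨m + k + n + 1 - s, by omega, by omega, ?_, ?_⟩⟩
  · intro i hi hik
    have hτi := hmid (k + 1 - i) (by omega) (by omega)
    rw [dualPerm_apply_rev k σ (by omega)] at hτi
    have := hσ.apply_le (i := i) (by omega) (by omega)
    rw [_root_.dualPerm, show m + k + n + 1 - (n + i) = m + (k + 1 - i) by omega, hτi]
    omega
  · have := hσ.apply_le le_rfl hk
    rw [dualPerm_apply_rev _ _ (by omega), hτt, dualPerm_apply_self]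
    omega
  · intro j hjt hj hjn
    have := hτgt (m + k + n + 1 - j) (by omega) (by omega) (by omega)
    simp only [_root_.dualPerm]
    omega
  · have := hσ.apply_le hk le_rfl
    rw [dualPerm_apply_rev _ _ (by omega), hτs, dualPerm_apply_one]
    omega
  · intro j hjs hj hjm
    have := hτlt (m + k + n + 1 - j) (by omega) (by omega) (by omega)
    simp only [_root_.dualPerm]
    omega

end Extensions

section Synchronized

variable {k : ℕ} {σ ρ τ υ : ℕ → ℕ}

theorem IsSyncLeftExt.dualPerm {m : ℕ} (hk : 1 ≤ k) (hσ : IsPermOn k σ) (hρ : IsPermOn k ρ)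
    (h : IsSyncLeftExt k m (dualPerm k σ) (dualPerm k ρ) τ υ) :
    IsSyncRightExt k m σ ρ (dualPerm (m + k) τ) (dualPerm (m + k) υ) := by
  obtain ⟨hτ, hυ, s, hs1, hsm, hτs, hυs, hagree⟩ := h
  refine ⟨hτ.dualPerm hk hσ, hυ.dualPerm hk hρ, m + k + 1 - s, by omega, by omega, ?_, ?_, ?_⟩
  · have := hσ.apply_le hk le_rfl
    rw [dualPerm_apply_rev _ _ (by omega), hτs, dualPerm_apply_one]
    omega
  · have := hρ.apply_le hk le_rfl
    rw [dualPerm_apply_rev _ _ (by omega), hυs, dualPerm_apply_one]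
    omega
  · intro i hit hki him
    simp only [_root_.dualPerm, hagree (m + k + 1 - i) (by omega) (by omega) (by omega)]

theorem IsSyncRightExt.dualPerm {n : ℕ} (hk : 1 ≤ k) (hσ : IsPermOn k σ) (hρ : IsPermOn k ρ)
    (h : IsSyncRightExt k n (dualPerm k σ) (dualPerm k ρ) τ υ) :
    IsSyncLeftExt k n σ ρ (dualPerm (k + n) τ) (dualPerm (k + n) υ) := by
  obtain ⟨hτ, hυ, t, hkt, htn, hτt, hυt, hagree⟩ := h
  refine ⟨hτ.dualPerm hk hσ, hυ.dualPerm hk hρ, k + n + 1 - t, by omega, by omega, ?_, ?_, ?_⟩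
  · have := hσ.apply_le le_rfl hk
    rw [dualPerm_apply_rev _ _ (by omega), hτt, dualPerm_apply_self]
    omega
  · have := hρ.apply_le le_rfl hk
    rw [dualPerm_apply_rev _ _ (by omega), hυt, dualPerm_apply_self]
    omega
  · intro i his hi hin
    simp only [_root_.dualPerm, hagree (k + n + 1 - i) (by omega) (by omega) (by omega)]

theorem IsSyncTwoSidedExt.dualPerm {m n : ℕ} (hk : 1 ≤ k) (hσ : IsPermOn k σ)
    (hρ : IsPermOn k ρ) (h : IsSyncTwoSidedExt k m n (dualPerm k σ) (dualPerm k ρ) τ υ) :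
    IsSyncTwoSidedExt k n m σ ρ (dualPerm (m + k + n) τ) (dualPerm (m + k + n) υ) := by
  obtain ⟨hτ, hυ, s, t, hs1, hsm, hkt, htn, hτs, hυs, hτt, hυt, hagree⟩ := h
  refine ⟨hτ.dualPerm hk hσ, hυ.dualPerm hk hρ, m + k + n + 1 - t, m + k + n + 1 - s,
    by omega, by omega, by omega, by omega, ?_, ?_, ?_, ?_, ?_⟩
  · have := hσ.apply_le le_rfl hk
    rw [dualPerm_apply_rev _ _ (by omega), hτt, dualPerm_apply_self]
    omega
  · have := hρ.apply_le le_rfl hk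
    rw [dualPerm_apply_rev _ _ (by omega), hυt, dualPerm_apply_self]
    omega
  · have := hσ.apply_le hk le_rfl
    rw [dualPerm_apply_rev _ _ (by omega), hτs, dualPerm_apply_one]
    omega
  · have := hρ.apply_le hk le_rfl
    rw [dualPerm_apply_rev _ _ (by omega), hυs, dualPerm_apply_one]
    omega
  · intro i hit his hi
    simp only [_root_.dualPerm, hagree (m + k + n + 1 - i) (by omega) (by omega) (by omega)]

end Synchronized

theorem matSimilar_petrie_of_dualPerm {N : ℕ} {τ υ : ℕ → ℕ} (hτ : IsPermOn N τ)
    (hυ : IsPermOn N υ) (h : MatSimilar (petrie N (dualPerm N τ)) (petrie N (dualPerm N υ))) :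
    MatSimilar (petrie N τ) (petrie N υ) :=
  matSimilar_iff_isConj.2 <| (isConj_petrie_dualPerm hτ).trans <|
    (matSimilar_iff_isConj.1 h).trans (isConj_petrie_dualPerm hυ).symm

/-- Theorem 3. -/
theorem dualPerm_similar (k : ℕ) (hk : 3 ≤ k) (σ ρ : ℕ → ℕ)
    (hσ : IsPermOn k σ) (hρ : IsPermOn k ρ) :
    (RightSimilar k σ ρ → LeftSimilar k (dualPerm k σ) (dualPerm k ρ)) ∧
    (LeftSimilar k σ ρ → RightSimilar k (dualPerm k σ) (dualPerm k ρ)) ∧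
    (TwoSidedSimilar k σ ρ → TwoSidedSimilar k (dualPerm k σ) (dualPerm k ρ)) := by
  have hk1 : 1 ≤ k := by omega
  refine ⟨fun hR m hm τ υ h => ?_, fun hL n hn τ υ h => ?_, fun hT m n hm hn τ υ h => ?_⟩
  · have := hR m hm _ _ (h.dualPerm hk1 hσ hρ)
    rw [add_comm k m] at this
    exact matSimilar_petrie_of_dualPerm h.1.1 h.2.1.1 this
  · have := hL n hn _ _ (h.dualPerm hk1 hσ hρ)
    rw [add_comm n k] at this
    exact matSimilar_petrie_of_dualPerm h.1.1 h.2.1.1 this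
  · have := hT n m hn hm _ _ (h.dualPerm hk1 hσ hρ)
    rw [show n + k + m = m + k + n by omega] at this
    exact matSimilar_petrie_of_dualPerm h.1.1 h.2.1.1 this
end

section
/- Let ℓ ≥ 4 and k ≥ ℓ+1 be integers. Let σ_ℓ, ρ_ℓ be permutations of P_ℓ with σ_ℓ(ℓ) = ℓ−1 and σ_ℓ(ℓ−1) < ℓ−1. Let ξ, η be permutations of {ℓ−1, ℓ, …, k} with ξ(ℓ) = ℓ−1, η(ℓ−1) = ℓ and η(ℓ) > ℓ. Define permutations of P_k by: (σξ)_k(x) = σ_ℓ(x) if 1 ≤ x ≤ ℓ−1 and σ_ℓ(x) ≠ ℓ, (σξ)_k(x) = ξ(ℓ−1) if 1 ≤ x ≤ ℓ−1 and σ_ℓ(x) = ℓ, and (σξ)_k(x) = ξ(x) if ℓ ≤ x ≤ k; (ση)_k(x) = σ_ℓ(x) if 1 ≤ x ≤ ℓ−1 and (ση)_k(x) = η(x) if ℓ ≤ x ≤ k; (ρη)_k(x) = ρ_ℓ(x) if 1 ≤ x ≤ ℓ−1, (ρη)_k(x) = η(x) if ℓ ≤ x ≤ k and η(x) ≠ ℓ−1,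 and (ρη)_k(x) = ρ_ℓ(ℓ) if ℓ ≤ x ≤ k and η(x) = ℓ−1. If σ_ℓ and ρ_ℓ are right similar and the permutations of P_{k−ℓ+2} obtained from ξ and η by the shift x ↦ x−(ℓ−2) are two-sided similar, then (σξ)_k and (ση)_k are right similar and two-sided similar, and (ση)_k and (ρη)_k are right similar. -/
open Matrix

lemma aux_dim {N M : ℕ} (σ' ρ' : ℕ → ℕ) (h : N = M)
    (hs : MatSimilar (petrie N σ') (petrie N ρ')) :
    MatSimilar (petrie M σ') (petrie M ρ') := by subst h; exact hs

lemma aux_perm {M N : ℕ} (σ' : ℕ → ℕ) (h : M = N) (hp : IsPermOn N σ') : IsPermOn M σ' := by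
  rw [h]; exact hp

lemma aux_mid (ℓ k m : ℕ) (g f σ' : ℕ → ℕ) (hl : 4 ≤ ℓ) (hk : ℓ + 1 ≤ k)
    (hag : ∀ i, 2 ≤ i → i ≤ k - 1 → σ' (m + i) = m + f i)
    (hfg : ∀ x, ℓ ≤ x → x ≤ k → f x = g x)
    (hgmem : ∀ x, ℓ - 1 ≤ x → x ≤ k → ℓ - 1 ≤ g x ∧ g x ≤ k) :
    ∀ i, 2 ≤ i → i ≤ k - ℓ + 2 - 1 →
      σ' (m + (ℓ - 2) + i) = m + (ℓ - 2) + (g (i + (ℓ - 2)) - (ℓ - 2)) := by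
  intro i h1 h2
  have hx := hag (ℓ - 2 + i) (by omega) (by omega)
  rw [hfg _ (by omega) (by omega)] at hx
  have hm2 := hgmem (ℓ - 2 + i) (by omega) (by omega)
  rw [show m + (ℓ - 2) + i = m + (ℓ - 2 + i) from by omega,
    show i + (ℓ - 2) = ℓ - 2 + i from by omega]
  omega

lemma aux_val1 (ℓ m u : ℕ) (g : ℕ → ℕ) (hl : 4 ≤ ℓ) (hb : ℓ - 1 ≤ g (ℓ - 1))
    (h : u = m + g (ℓ - 1)) : u = m + (ℓ - 2) + (g (1 + (ℓ - 2)) - (ℓ - 2)) := by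
  rw [show 1 + (ℓ - 2) = ℓ - 1 from by omega]; omega

lemma aux_valK (ℓ k m u : ℕ) (g : ℕ → ℕ) (hl : 4 ≤ ℓ) (hk : ℓ + 1 ≤ k)
    (hb : ℓ - 1 ≤ g k) (h : u = m + g k) :
    u = m + (ℓ - 2) + (g (k - ℓ + 2 + (ℓ - 2)) - (ℓ - 2)) := by
  rw [show k - ℓ + 2 + (ℓ - 2) = k from by omega]; omega

lemma aux_big (ℓ k m n t : ℕ) (σ' : ℕ → ℕ) (hl : 4 ≤ ℓ) (hk : ℓ + 1 ≤ k)
    (hbig : ∀ j, j ≠ t → m + k ≤ j → j ≤ m + k + n → m + k < σ' j) :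
    ∀ j, j ≠ t → m + (ℓ - 2) + (k - ℓ + 2) ≤ j → j ≤ m + (ℓ - 2) + (k - ℓ + 2) + n →
      m + (ℓ - 2) + (k - ℓ + 2) < σ' j := by
  intro j hne h1 h2
  have := hbig j hne (by omega) (by omega)
  omega

lemma aux_spoint (ℓ k m a s : ℕ) (σℓ ξ sx se σ' ρ' : ℕ → ℕ)
    (hl : 4 ≤ ℓ) (hk : ℓ + 1 ≤ k) (ha1 : 1 ≤ a) (ha2 : a ≤ ℓ - 2) (ha : σℓ a = ℓ)
    (hsx2 : ∀ x, 1 ≤ x → x ≤ ℓ - 1 → σℓ x = ℓ → sx x = ξ (ℓ - 1))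
    (hse1 : ∀ x, 1 ≤ x → x ≤ ℓ - 1 → se x = σℓ x)
    (hsxeq : ∀ x, 1 ≤ x → x ≤ ℓ - 1 → x ≠ a → sx x = σℓ x)
    (hσsmall : ∀ x, 1 ≤ x → x ≤ ℓ - 1 → x ≠ a → σℓ x ≤ ℓ - 2)
    (hs1 : 1 ≤ s) (hs2 : s ≤ m)
    (hσs : σ' s = m + sx 1) (hρs : ρ' s = m + se 1)
    (hσag : ∀ i, 2 ≤ i → i ≤ k - 1 → σ' (m + i) = m + sx i)
    (hρag : ∀ i, 2 ≤ i → i ≤ k - 1 → ρ' (m + i) = m + se i) :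
    ∃ s', 1 ≤ s' ∧ s' ≤ m + (ℓ - 2) ∧ σ' s' = m + ξ (ℓ - 1) ∧ ρ' s' = m + ℓ ∧
      (∀ i, i ≠ s' → i = s → σ' i = m + σℓ 1 ∧ ρ' i = m + σℓ 1 ∧ σℓ 1 ≤ ℓ - 2) ∧
      (∀ j, m + j ≠ s' → 2 ≤ j → j ≤ ℓ - 1 → j ≠ a) := by
  by_cases hA : a = 1
  · refine ⟨s, by omega, by omega, ?_, ?_, ?_, ?_⟩
    · rw [hσs, hsx2 1 le_rfl (by omega) (hA ▸ ha)]
    · rw [hρs, hse1 1 le_rfl (by omega), ← hA, ha]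
    · intro i hne his; exact absurd his hne
    · intro j _ hj1 _; omega
  · have h2a : 2 ≤ a := by omega
    refine ⟨m + a, by omega, by omega, ?_, ?_, ?_, ?_⟩
    · have h := hσag a h2a (by omega)
      rw [hsx2 a ha1 (by omega) ha] at h; exact h
    · have h := hρag a h2a (by omega)
      rw [hse1 a ha1 (by omega), ha] at h; exact h
    · intro i hne his; subst his
      have hsx1' : sx 1 = σℓ 1 := hsxeq 1 le_rfl (by omega) (fun h => hA h.symm)
      have hsm := hσsmall 1 le_rfl (by omega) (fun h => hA h.symm)
      exact ⟨by rw [hσs, hsx1'], by rw [hρs, hse1 1 le_rfl (by omega)], hsm⟩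
    · intro j hne _ _ h; exact hne (by rw [h])

lemma aux_small (ℓ k m s s' a : ℕ) (σℓ f σ' : ℕ → ℕ) (hl : 4 ≤ ℓ) (hk : ℓ + 1 ≤ k)
    (hsm : ∀ i, i ≠ s → 1 ≤ i → i ≤ m + 1 → σ' i < m + 1)
    (hag : ∀ i, 2 ≤ i → i ≤ k - 1 → σ' (m + i) = m + f i)
    (hfeq : ∀ x, 1 ≤ x → x ≤ ℓ - 1 → x ≠ a → f x = σℓ x)
    (hσsmall : ∀ x, 1 ≤ x → x ≤ ℓ - 1 → x ≠ a → σℓ x ≤ ℓ - 2)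
    (hsp1 : ∀ i, i ≠ s' → i = s → σ' i = m + σℓ 1 ∧ σℓ 1 ≤ ℓ - 2)
    (hsp2 : ∀ j, m + j ≠ s' → 2 ≤ j → j ≤ ℓ - 1 → j ≠ a) :
    ∀ i, i ≠ s' → 1 ≤ i → i ≤ m + (ℓ - 2) + 1 → σ' i < m + (ℓ - 2) + 1 := by
  intro i hne h1 h2
  by_cases hi : i ≤ m + 1
  · by_cases his : i = s
    · have := hsp1 i hne his; omega
    · have := hsm i his h1 hi; omega
  · obtain ⟨j, rfl⟩ : ∃ j, i = m + j := ⟨i - m, by omega⟩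
    have hja := hsp2 j hne (by omega) (by omega)
    have hx := hag j (by omega) (by omega)
    rw [hfeq j (by omega) (by omega) hja] at hx
    have := hσsmall j (by omega) (by omega) hja
    omega

lemma aux_sync2 (ℓ k m n s s' t a : ℕ) (σℓ sx se σ' ρ' : ℕ → ℕ)
    (hl : 4 ≤ ℓ) (hk : ℓ + 1 ≤ k) (hs2 : s ≤ m) (ht1 : m + k + 1 ≤ t)
    (hσag : ∀ i, 2 ≤ i → i ≤ k - 1 → σ' (m + i) = m + sx i)
    (hρag : ∀ i, 2 ≤ i → i ≤ k - 1 → ρ' (m + i) = m + se i)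
    (hsxeq : ∀ x, 1 ≤ x → x ≤ ℓ - 1 → x ≠ a → sx x = σℓ x)
    (hse1 : ∀ x, 1 ≤ x → x ≤ ℓ - 1 → se x = σℓ x)
    (hsp1 : ∀ i, i ≠ s' → i = s → σ' i = m + σℓ 1 ∧ ρ' i = m + σℓ 1 ∧ σℓ 1 ≤ ℓ - 2)
    (hsp2 : ∀ j, m + j ≠ s' → 2 ≤ j → j ≤ ℓ - 1 → j ≠ a)
    (hsync : ∀ i, i ≠ s → i ≠ t →
      (1 ≤ i ∧ i ≤ m + 1) ∨ (m + k ≤ i ∧ i ≤ m + k + n) → σ' i = ρ' i) :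
    ∀ i, i ≠ s' → i ≠ t →
      (1 ≤ i ∧ i ≤ m + (ℓ - 2) + 1) ∨
        (m + (ℓ - 2) + (k - ℓ + 2) ≤ i ∧ i ≤ m + (ℓ - 2) + (k - ℓ + 2) + n) → σ' i = ρ' i := by
  intro i his' hit hcase
  rcases hcase with ⟨h1, h2⟩ | ⟨h1, h2⟩
  · by_cases hi : i ≤ m + 1
    · by_cases his : i = s
      · have := hsp1 i his' his; omega
      · exact hsync i his hit (Or.inl ⟨h1, hi⟩)
    · obtain ⟨j, rfl⟩ : ∃ j, i = m + j := ⟨i - m, by omega⟩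
      have hja := hsp2 j his' (by omega) (by omega)
      have hx := hσag j (by omega) (by omega)
      have hy := hρag j (by omega) (by omega)
      rw [hsxeq j (by omega) (by omega) hja] at hx
      rw [hse1 j (by omega) (by omega)] at hy
      omega
  · exact hsync i (by omega) hit (Or.inr ⟨by omega, by omega⟩)


set_option maxHeartbeats 1000000 in
/-- Theorem 4(a). -/
theorem combined_extensions_right_similar
    (ℓ k : ℕ) (hl : 4 ≤ ℓ) (hk : ℓ + 1 ≤ k)
    (σℓ ρℓ : ℕ → ℕ) (hσℓ : IsPermOn ℓ σℓ) (hρℓ : IsPermOn ℓ ρℓ)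
    (hσl1 : σℓ ℓ = ℓ - 1) (hσl2 : σℓ (ℓ - 1) < ℓ - 1)
    (ξ η : ℕ → ℕ)
    (hξ : Set.BijOn ξ (Set.Icc (ℓ - 1) k) (Set.Icc (ℓ - 1) k))
    (hη : Set.BijOn η (Set.Icc (ℓ - 1) k) (Set.Icc (ℓ - 1) k))
    (hξ1 : ξ ℓ = ℓ - 1) (hη1 : η (ℓ - 1) = ℓ) (hη2 : ℓ < η ℓ)
    (sx se re : ℕ → ℕ)
    (hsxP : IsPermOn k sx) (hseP : IsPermOn k se) (hreP : IsPermOn k re)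
    (hsx1 : ∀ x, 1 ≤ x → x ≤ ℓ - 1 → σℓ x ≠ ℓ → sx x = σℓ x)
    (hsx2 : ∀ x, 1 ≤ x → x ≤ ℓ - 1 → σℓ x = ℓ → sx x = ξ (ℓ - 1))
    (hsx3 : ∀ x, ℓ ≤ x → x ≤ k → sx x = ξ x)
    (hse1 : ∀ x, 1 ≤ x → x ≤ ℓ - 1 → se x = σℓ x)
    (hse2 : ∀ x, ℓ ≤ x → x ≤ k → se x = η x)
    (hre1 : ∀ x, 1 ≤ x → x ≤ ℓ - 1 → re x = ρℓ x)
    (hre2 : ∀ x, ℓ ≤ x → x ≤ k → η x ≠ ℓ - 1 → re x = η x)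
    (hre3 : ∀ x, ℓ ≤ x → x ≤ k → η x = ℓ - 1 → re x = ρℓ ℓ)
    (hξη : TwoSidedSimilar (k - ℓ + 2)
      (fun x => ξ (x + (ℓ - 2)) - (ℓ - 2)) (fun x => η (x + (ℓ - 2)) - (ℓ - 2)))
    (hσρ : RightSimilar ℓ σℓ ρℓ) :
    (RightSimilar k sx se ∧ TwoSidedSimilar k sx se) ∧ RightSimilar k se re := by
  -- basic facts about σℓ
  obtain ⟨a, haI, ha⟩ := hσℓ.2.2 (Set.mem_Icc.mpr ⟨by omega, le_refl ℓ⟩)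
  rw [Set.mem_Icc] at haI
  have hσinj : ∀ x y, 1 ≤ x → x ≤ ℓ → 1 ≤ y → y ≤ ℓ → σℓ x = σℓ y → x = y :=
    fun x y hx1 hx2 hy1 hy2 h => hσℓ.2.1 (Set.mem_Icc.mpr ⟨hx1, hx2⟩) (Set.mem_Icc.mpr ⟨hy1, hy2⟩) h
  have hσmem : ∀ x, 1 ≤ x → x ≤ ℓ → 1 ≤ σℓ x ∧ σℓ x ≤ ℓ := by
    intro x h1 h2
    have := hσℓ.1 (Set.mem_Icc.mpr ⟨h1, h2⟩)
    rwa [Set.mem_Icc] at this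
  have ha1 : 1 ≤ a := haI.1
  have ha2 : a ≤ ℓ - 2 := by
    have hne1 : a ≠ ℓ := fun h => by rw [h, hσl1] at ha; omega
    have hne2 : a ≠ ℓ - 1 := fun h => by rw [h] at ha; omega
    omega
  have hσsmall : ∀ x, 1 ≤ x → x ≤ ℓ - 1 → x ≠ a → σℓ x ≤ ℓ - 2 := by
    intro x h1 h2 h3
    have h4 := hσmem x h1 (by omega)
    have h5 : σℓ x ≠ ℓ := fun h => h3 (hσinj x a h1 (by omega) ha1 (by omega) (h.trans ha.symm))
    have h6 : σℓ x ≠ ℓ - 1 := fun h => by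
      have := hσinj x ℓ h1 (by omega) (by omega) le_rfl (h.trans hσl1.symm); omega
    omega
  have hsxeq : ∀ x, 1 ≤ x → x ≤ ℓ - 1 → x ≠ a → sx x = σℓ x := by
    intro x h1 h2 h3
    exact hsx1 x h1 h2 (fun h => h3 (hσinj x a h1 (by omega) ha1 (by omega) (h.trans ha.symm)))
  -- basic facts about ξ and η
  have hξmem : ∀ x, ℓ - 1 ≤ x → x ≤ k → ℓ - 1 ≤ ξ x ∧ ξ x ≤ k := by
    intro x h1 h2
    have := hξ.1 (Set.mem_Icc.mpr ⟨h1, h2⟩)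
    rwa [Set.mem_Icc] at this
  have hηmem : ∀ x, ℓ - 1 ≤ x → x ≤ k → ℓ - 1 ≤ η x ∧ η x ≤ k := by
    intro x h1 h2
    have := hη.1 (Set.mem_Icc.mpr ⟨h1, h2⟩)
    rwa [Set.mem_Icc] at this
  have hηinj : ∀ x y, ℓ - 1 ≤ x → x ≤ k → ℓ - 1 ≤ y → y ≤ k → η x = η y → x = y :=
    fun x y hx1 hx2 hy1 hy2 h => hη.2.1 (Set.mem_Icc.mpr ⟨hx1, hx2⟩) (Set.mem_Icc.mpr ⟨hy1, hy2⟩) h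
  obtain ⟨b, hbI, hb⟩ := hη.2.2 (Set.mem_Icc.mpr ⟨le_refl (ℓ - 1), by omega⟩)
  rw [Set.mem_Icc] at hbI
  have hb1 : ℓ + 1 ≤ b := by
    have h1 : b ≠ ℓ - 1 := fun h => by rw [h, hη1] at hb; omega
    have h2 : b ≠ ℓ := fun h => by rw [h] at hb; omega
    omega
  have hb2 : b ≤ k := hbI.2
  have hηbig : ∀ x, ℓ ≤ x → x ≤ k → x ≠ b → ℓ + 1 ≤ η x := by
    intro x h1 h2 h3
    have h4 := hηmem x (by omega) h2
    have h5 : η x ≠ ℓ := fun h => by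
      have := hηinj x (ℓ - 1) (by omega) h2 le_rfl (by omega) (h.trans hη1.symm); omega
    have h6 : η x ≠ ℓ - 1 := fun h =>
      h3 (hηinj x b (by omega) h2 (by omega) hb2 (h.trans hb.symm))
    omega
  have hξk := hξmem k (by omega) le_rfl
  have hξl1 := hξmem (ℓ - 1) le_rfl (by omega)
  have hηk := hηmem k (by omega) le_rfl
  have hηl1 : ℓ - 1 ≤ η (ℓ - 1) := by omega
  have hsxk : sx k = ξ k := hsx3 k (by omega) le_rfl
  have hsek : se k = η k := hse2 k (by omega) le_rfl
  refine ⟨⟨?_, ?_⟩, ?_⟩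
  · -- RightSimilar k sx se
    intro n hn σ' ρ' hext
    obtain ⟨hextσ, hextρ, t, ht1, ht2, hσt, hρt, hsync⟩ := hext
    obtain ⟨hσP, hσag, t1, ht11, ht12, hσt1, hσbig⟩ := hextσ
    obtain ⟨hρP, hρag, t2, ht21, ht22, hρt2, hρbig⟩ := hextρ
    have ht1t : t1 = t := by
      apply hσP.2.1 (Set.mem_Icc.mpr ⟨by omega, by omega⟩) (Set.mem_Icc.mpr ⟨by omega, by omega⟩)
      rw [hσt1, hσt]
    have ht2t : t2 = t := by
      apply hρP.2.1 (Set.mem_Icc.mpr ⟨by omega, by omega⟩) (Set.mem_Icc.mpr ⟨by omega, by omega⟩)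
      rw [hρt2, hρt]
    rw [ht1t] at hσbig
    rw [ht2t] at hρbig
    clear * - hξη hn hσP hρP hσag hρag ht1 ht2 hσt hρt hsync hσbig hρbig hsx2 hsx3 hse1 hse2
      hsxeq hσsmall hξmem hηmem hη1 ha ha1 ha2 hsxk hsek hξk hηk hξl1 hl hk
    have key : MatSimilar (petrie (ℓ - 2 + (k - ℓ + 2) + n) σ')
        (petrie (ℓ - 2 + (k - ℓ + 2) + n) ρ') := by
      apply hξη (ℓ - 2) n (by omega) hn σ' ρ'
      refine ⟨⟨?_, ?_, ⟨a, ha1, by omega, ?_, ?_⟩, ⟨t, by omega, by omega, ?_, ?_⟩⟩,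
        ⟨?_, ?_, ⟨a, ha1, by omega, ?_, ?_⟩, ⟨t, by omega, by omega, ?_, ?_⟩⟩,
        a, t, ha1, by omega, by omega, by omega, ?_, ?_, ?_, ?_, ?_⟩
      · rw [show ℓ - 2 + (k - ℓ + 2) + n = k + n from by omega]; exact hσP
      · intro i h1 h2
        have hx := hσag (ℓ - 2 + i) (by omega) (by omega)
        rw [hsx3 _ (by omega) (by omega)] at hx
        have hm2 := hξmem (ℓ - 2 + i) (by omega) (by omega)
        show σ' (ℓ - 2 + i) = ℓ - 2 + (ξ (i + (ℓ - 2)) - (ℓ - 2))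
        rw [show i + (ℓ - 2) = ℓ - 2 + i from by omega]
        omega
      · have hx := hσag a ha1 (by omega)
        rw [hsx2 a ha1 (by omega) ha] at hx
        show σ' a = ℓ - 2 + (ξ (1 + (ℓ - 2)) - (ℓ - 2))
        rw [show 1 + (ℓ - 2) = ℓ - 1 from by omega]
        omega
      · intro i hne h1 h2
        have hx := hσag i h1 (by omega)
        rw [hsxeq i h1 (by omega) hne] at hx
        have := hσsmall i h1 (by omega) hne
        omega
      · show σ' t = ℓ - 2 + (ξ (k - ℓ + 2 + (ℓ - 2)) - (ℓ - 2))
        rw [show k - ℓ + 2 + (ℓ - 2) = k from by omega, hσt, hsxk]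
        omega
      · intro j hne h1 h2
        have := hσbig j hne (by omega) (by omega)
        omega
      · rw [show ℓ - 2 + (k - ℓ + 2) + n = k + n from by omega]; exact hρP
      · intro i h1 h2
        have hx := hρag (ℓ - 2 + i) (by omega) (by omega)
        rw [hse2 _ (by omega) (by omega)] at hx
        have hm2 := hηmem (ℓ - 2 + i) (by omega) (by omega)
        show ρ' (ℓ - 2 + i) = ℓ - 2 + (η (i + (ℓ - 2)) - (ℓ - 2))
        rw [show i + (ℓ - 2) = ℓ - 2 + i from by omega]
        omega
      · have hx := hρag a ha1 (by omega)
        rw [hse1 a ha1 (by omega), ha] at hx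
        show ρ' a = ℓ - 2 + (η (1 + (ℓ - 2)) - (ℓ - 2))
        rw [show 1 + (ℓ - 2) = ℓ - 1 from by omega, hη1]
        omega
      · intro i hne h1 h2
        have hx := hρag i h1 (by omega)
        rw [hse1 i h1 (by omega)] at hx
        have := hσsmall i h1 (by omega) hne
        omega
      · show ρ' t = ℓ - 2 + (η (k - ℓ + 2 + (ℓ - 2)) - (ℓ - 2))
        rw [show k - ℓ + 2 + (ℓ - 2) = k from by omega, hρt, hsek]
        omega
      · intro j hne h1 h2
        have := hρbig j hne (by omega) (by omega)
        omega
      · have hx := hσag a ha1 (by omega)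
        rw [hsx2 a ha1 (by omega) ha] at hx
        show σ' a = ℓ - 2 + (ξ (1 + (ℓ - 2)) - (ℓ - 2))
        rw [show 1 + (ℓ - 2) = ℓ - 1 from by omega]
        omega
      · have hx := hρag a ha1 (by omega)
        rw [hse1 a ha1 (by omega), ha] at hx
        show ρ' a = ℓ - 2 + (η (1 + (ℓ - 2)) - (ℓ - 2))
        rw [show 1 + (ℓ - 2) = ℓ - 1 from by omega, hη1]
        omega
      · show σ' t = ℓ - 2 + (ξ (k - ℓ + 2 + (ℓ - 2)) - (ℓ - 2))
        rw [show k - ℓ + 2 + (ℓ - 2) = k from by omega, hσt, hsxk]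
        omega
      · show ρ' t = ℓ - 2 + (η (k - ℓ + 2 + (ℓ - 2)) - (ℓ - 2))
        rw [show k - ℓ + 2 + (ℓ - 2) = k from by omega, hρt, hsek]
        omega
      · intro i hia hit hcase
        rcases hcase with ⟨h1, h2⟩ | ⟨h1, h2⟩
        · have hx := hσag i h1 (by omega)
          have hy := hρag i h1 (by omega)
          rw [hsxeq i h1 (by omega) hia] at hx
          rw [hse1 i h1 (by omega)] at hy
          omega
        · exact hsync i hit (by omega) (by omega)
    rwa [show ℓ - 2 + (k - ℓ + 2) + n = k + n from by omega] at key
  · -- TwoSidedSimilar k sx se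
    intro m n hm hn σ' ρ' hext
    obtain ⟨hextσ, hextρ, s, t, hs1, hs2, ht1, ht2, hσs, hρs, hσt, hρt, hsync⟩ := hext
    obtain ⟨hσP, hσag, ⟨s1, hs11, hs12, hσs1, hσsm⟩, t1, ht11, ht12, hσt1, hσbig⟩ := hextσ
    obtain ⟨hρP, hρag, ⟨s2, hs21, hs22, hρs2, hρsm⟩, t2, ht21, ht22, hρt2, hρbig⟩ := hextρ
    have hs1s : s1 = s := by
      apply hσP.2.1 (Set.mem_Icc.mpr ⟨by omega, by omega⟩) (Set.mem_Icc.mpr ⟨by omega, by omega⟩)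
      rw [hσs1, hσs]
    have ht1t : t1 = t := by
      apply hσP.2.1 (Set.mem_Icc.mpr ⟨by omega, by omega⟩) (Set.mem_Icc.mpr ⟨by omega, by omega⟩)
      rw [hσt1, hσt]
    have hs2s : s2 = s := by
      apply hρP.2.1 (Set.mem_Icc.mpr ⟨by omega, by omega⟩) (Set.mem_Icc.mpr ⟨by omega, by omega⟩)
      rw [hρs2, hρs]
    have ht2t : t2 = t := by
      apply hρP.2.1 (Set.mem_Icc.mpr ⟨by omega, by omega⟩) (Set.mem_Icc.mpr ⟨by omega, by omega⟩)
      rw [hρt2, hρt]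
    rw [hs1s] at hσsm
    rw [ht1t] at hσbig
    rw [hs2s] at hρsm
    rw [ht2t] at hρbig
    obtain ⟨s', hs'1, hs'2, hσs', hρs', hsp1, hsp2⟩ :=
      aux_spoint ℓ k m a s σℓ ξ sx se σ' ρ' hl hk ha1 ha2 ha hsx2 hse1 hsxeq hσsmall
        hs1 hs2 hσs hρs hσag hρag
    have hρs'' : ρ' s' = m + η (ℓ - 1) := by rw [hη1]; exact hρs'
    have hσt' : σ' t = m + ξ k := by rw [hσt, hsxk]
    have hρt' : ρ' t = m + η k := by rw [hρt, hsek]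
    exact aux_dim σ' ρ' (show m + (ℓ - 2) + (k - ℓ + 2) + n = m + k + n by omega)
      (hξη (m + (ℓ - 2)) n (by omega) hn σ' ρ'
        ⟨⟨aux_perm σ' (by omega) hσP,
          aux_mid ℓ k m ξ sx σ' hl hk hσag hsx3 hξmem,
          ⟨s', hs'1, hs'2, aux_val1 ℓ m _ ξ hl hξl1.1 hσs',
            aux_small ℓ k m s s' a σℓ sx σ' hl hk hσsm hσag hsxeq hσsmall
              (fun i u v => ⟨(hsp1 i u v).1, (hsp1 i u v).2.2⟩) hsp2⟩,
          ⟨t, by omega, by omega, aux_valK ℓ k m _ ξ hl hk hξk.1 hσt',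
            aux_big ℓ k m n t σ' hl hk hσbig⟩⟩,
         ⟨aux_perm ρ' (by omega) hρP,
          aux_mid ℓ k m η se ρ' hl hk hρag hse2 hηmem,
          ⟨s', hs'1, hs'2, aux_val1 ℓ m _ η hl hηl1 hρs'',
            aux_small ℓ k m s s' a σℓ se ρ' hl hk hρsm hρag (fun x u v _ => hse1 x u v) hσsmall
              (fun i u v => ⟨(hsp1 i u v).2.1, (hsp1 i u v).2.2⟩) hsp2⟩,
          ⟨t, by omega, by omega, aux_valK ℓ k m _ η hl hk hηk.1 hρt',
            aux_big ℓ k m n t ρ' hl hk hρbig⟩⟩,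
         s', t, hs'1, hs'2, by omega, by omega,
         aux_val1 ℓ m _ ξ hl hξl1.1 hσs',
         aux_val1 ℓ m _ η hl hηl1 hρs'',
         aux_valK ℓ k m _ ξ hl hk hξk.1 hσt',
         aux_valK ℓ k m _ η hl hk hηk.1 hρt',
         aux_sync2 ℓ k m n s s' t a σℓ sx se σ' ρ' hl hk hs2 ht1 hσag hρag hsxeq hse1
           hsp1 hsp2 hsync⟩)
  · -- RightSimilar k se re
    intro n hn σ' ρ' hext
    obtain ⟨hextσ, hextρ, t, ht1, ht2, hσt, hρt, hsync⟩ := hext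
    obtain ⟨hσP, hσag, t1, ht11, ht12, hσt1, hσbig⟩ := hextσ
    obtain ⟨hρP, hρag, t2, ht21, ht22, hρt2, hρbig⟩ := hextρ
    have ht1t : t1 = t := by
      apply hσP.2.1 (Set.mem_Icc.mpr ⟨by omega, by omega⟩) (Set.mem_Icc.mpr ⟨by omega, by omega⟩)
      rw [hσt1, hσt]
    have ht2t : t2 = t := by
      apply hρP.2.1 (Set.mem_Icc.mpr ⟨by omega, by omega⟩) (Set.mem_Icc.mpr ⟨by omega, by omega⟩)
      rw [hρt2, hρt]
    rw [ht1t] at hσbig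
    rw [ht2t] at hρbig
    clear * - hσρ hn hσP hρP hσag hρag ht1 ht2 hσt hρt hsync hσbig hρbig hse1 hse2 hre1 hre2
      hre3 hηbig hηmem hηinj hb hb1 hb2 hσl1 hsek hηk hl hk
    have hagσ : ∀ i, 1 ≤ i → i ≤ ℓ - 1 → σ' i = σℓ i := fun i h1 h2 => by
      rw [hσag i h1 (by omega), hse1 i h1 h2]
    have hagρ : ∀ i, 1 ≤ i → i ≤ ℓ - 1 → ρ' i = ρℓ i := fun i h1 h2 => by
      rw [hρag i h1 (by omega), hre1 i h1 h2]
    have hmidσ : ∀ j, ℓ ≤ j → j ≤ k - 1 → σ' j = η j := fun j h1 h2 => by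
      rw [hσag j (by omega) h2, hse2 j h1 (by omega)]
    have hne_b : ∀ j, ℓ ≤ j → j ≤ k → j ≠ b → η j ≠ ℓ - 1 := fun j h1 h2 h3 h =>
      h3 (hηinj j b (by omega) h2 (by omega) hb2 (h.trans hb.symm))
    have hmidρ : ∀ j, ℓ ≤ j → j ≤ k - 1 → j ≠ b → ρ' j = η j := fun j h1 h2 h3 => by
      rw [hρag j (by omega) h2, hre2 j h1 (by omega) (hne_b j h1 (by omega) h3)]
    obtain ⟨t0, ht01, ht02, hvσ, hvρ, hother⟩ :
        ∃ t0, ℓ + 1 ≤ t0 ∧ t0 ≤ k + n ∧ σ' t0 = ℓ - 1 ∧ ρ' t0 = ρℓ ℓ ∧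
          ∀ j, j ≠ t0 → ℓ ≤ j → j ≤ k + n → ℓ < σ' j ∧ ℓ < ρ' j ∧ σ' j = ρ' j := by
      by_cases hbk : b = k
      · have hbk' : η k = ℓ - 1 := by rw [← hbk]; exact hb
        refine ⟨t, by omega, ht2, ?_, ?_, ?_⟩
        · rw [hσt, hsek, hbk']
        · rw [hρt, hre3 k (by omega) le_rfl hbk']
        · intro j hne h1 h2
          by_cases hjk : j ≤ k - 1
          · have he := hηbig j h1 (by omega) (by omega)
            have hx := hmidσ j h1 hjk
            have hy := hmidρ j h1 hjk (by omega)
            refine ⟨by omega, by omega, by omega⟩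
          · have hx := hσbig j hne (by omega) (by omega)
            have hy := hρbig j hne (by omega) (by omega)
            have hz := hsync j hne (by omega) (by omega)
            exact ⟨by omega, by omega, hz⟩
      · have hbk1 : b ≤ k - 1 := by omega
        refine ⟨b, by omega, by omega, ?_, ?_, ?_⟩
        · rw [hmidσ b (by omega) hbk1, hb]
        · rw [hρag b (by omega) hbk1, hre3 b (by omega) (by omega) hb]
        · intro j hne h1 h2
          by_cases hjk : j ≤ k - 1
          · have he := hηbig j h1 (by omega) hne
            have hx := hmidσ j h1 hjk
            have hy := hmidρ j h1 hjk hne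
            exact ⟨by omega, by omega, by omega⟩
          · by_cases hjt : j = t
            · have he := hηbig k (by omega) le_rfl (by omega)
              have hx : σ' j = η k := by rw [hjt, hσt, hsek]
              have hy : ρ' j = η k := by
                rw [hjt, hρt, hre2 k (by omega) le_rfl (hne_b k (by omega) le_rfl (by omega))]
              exact ⟨by omega, by omega, by omega⟩
            · have hx := hσbig j hjt (by omega) (by omega)
              have hy := hρbig j hjt (by omega) (by omega)
              have hz := hsync j hjt (by omega) (by omega)
              exact ⟨by omega, by omega, hz⟩
    have hP : ∀ τ : ℕ → ℕ, IsPermOn (k + n) τ → IsPermOn (ℓ + (k - ℓ + n)) τ := by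
      intro τ h; rwa [show ℓ + (k - ℓ + n) = k + n from by omega]
    have hvσ' : σ' t0 = σℓ ℓ := by rw [hvσ, hσl1]
    have key := hσρ (k - ℓ + n) (by omega) σ' ρ'
      ⟨⟨hP σ' hσP, hagσ, t0, ht01, by omega, hvσ',
          fun j hne h1 h2 => (hother j hne h1 (by omega)).1⟩,
       ⟨hP ρ' hρP, hagρ, t0, ht01, by omega, hvρ,
          fun j hne h1 h2 => (hother j hne h1 (by omega)).2.1⟩,
       t0, ht01, by omega, hvσ', hvρ,
          fun i hne h1 h2 => (hother i hne h1 (by omega)).2.2⟩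
    rwa [show ℓ + (k - ℓ + n) = k + n from by omega] at key
end

section
/- Let k ≥ 3 and m, n ≥ 0 be integers with m + n ≥ 1. Let σ_k, ρ_k be permutations of P_k whose Petrie matrices are similar over ℝ, and suppose it is not the case that σ_k(1) = 1 = ρ_k(1) and not the case that σ_k(k) = k = ρ_k(k). Let σ', ρ' be permutations of P_{m+k+n} such that σ'(i) = ρ'(i) ≤ m for all 1 ≤ i ≤ m, σ'(m+j) = m + σ_k(j) and ρ'(m+j) = m + ρ_k(j) for all 1 ≤ j ≤ k, and σ'(x) = ρ'(x) ≥ m+k+1 for all m+k+1 ≤ x ≤ m+k+n. Then the Petrie matrices M_{σ'} and M_{ρ'} have the same characteristic polynomial. Furthermore, if 1 is not an eigenvalue of M_{ρ_k}, then M_{σ'} and M_{ρ'} are similar over ℝ. -/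
open Matrix

section AuxPetrie
open Polynomial

lemma petrie_apply (n : ℕ) (σ : ℕ → ℕ) (i j : Fin (n-1)) :
    petrie n σ i j = if min (σ (i.1 + 1)) (σ (i.1 + 2)) ≤ j.1 + 1 ∧
        j.1 + 1 ≤ max (σ (i.1 + 1)) (σ (i.1 + 2)) - 1 then 1 else 0 := rfl

def idxEquiv (k m n : ℕ) (hk : 3 ≤ k) : (Fin (k-1) ⊕ (Fin m ⊕ Fin n)) ≃ Fin (m+k+n-1) :=
  (Equiv.sumAssoc (Fin (k-1)) (Fin m) (Fin n)).symm.trans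
    ((Equiv.sumCongr (Equiv.sumComm _ _) (Equiv.refl _)).trans
      ((Equiv.sumCongr finSumFinEquiv (Equiv.refl _)).trans
        (finSumFinEquiv.trans (finCongr (by omega)))))

lemma idx_inl_val (k m n : ℕ) (hk : 3 ≤ k) (c : Fin (k-1)) :
    (idxEquiv k m n hk (Sum.inl c)).1 = m + c.1 := by
  simp [idxEquiv]

lemma idx_inrl_val (k m n : ℕ) (hk : 3 ≤ k) (l : Fin m) :
    (idxEquiv k m n hk (Sum.inr (Sum.inl l))).1 = l.1 := by
  simp [idxEquiv]

lemma idx_inrr_val (k m n : ℕ) (hk : 3 ≤ k) (r : Fin n) :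
    (idxEquiv k m n hk (Sum.inr (Sum.inr r))).1 = m + k - 1 + r.1 := by
  simp [idxEquiv]; omega

lemma block11 (k m n : ℕ) (hk : 3 ≤ k) (τk τ' : ℕ → ℕ)
    (hb : ∀ j, 1 ≤ j → j ≤ k → 1 ≤ τk j ∧ τk j ≤ k)
    (hmid : ∀ j, 1 ≤ j → j ≤ k → τ' (m + j) = m + τk j) :
    (reindex (idxEquiv k m n hk).symm (idxEquiv k m n hk).symm
      (petrie (m+k+n) τ')).toBlocks₁₁ = petrie k τk := by
  ext c c'
  have hc := c.2; have hc' := c'.2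
  obtain ⟨h1a, h1b⟩ := hb (c.1+1) (by omega) (by omega)
  obtain ⟨h2a, h2b⟩ := hb (c.1+2) (by omega) (by omega)
  have e1 := hmid (c.1+1) (by omega) (by omega)
  have e2 := hmid (c.1+2) (by omega) (by omega)
  rw [← Nat.add_assoc] at e1 e2
  simp only [Matrix.toBlocks₁₁, Matrix.reindex_apply, Matrix.submatrix_apply, Equiv.symm_symm,
    Matrix.of_apply]
  rw [petrie_apply, petrie_apply, idx_inl_val, idx_inl_val, e1, e2]
  refine if_congr ?_ rfl rfl
  omega

lemma block12 (k m n : ℕ) (hk : 3 ≤ k) (τk τ' : ℕ → ℕ)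
    (hb : ∀ j, 1 ≤ j → j ≤ k → 1 ≤ τk j ∧ τk j ≤ k)
    (hmid : ∀ j, 1 ≤ j → j ≤ k → τ' (m + j) = m + τk j) :
    (reindex (idxEquiv k m n hk).symm (idxEquiv k m n hk).symm
      (petrie (m+k+n) τ')).toBlocks₁₂ = 0 := by
  ext c d
  have hc := c.2
  obtain ⟨h1a, h1b⟩ := hb (c.1+1) (by omega) (by omega)
  obtain ⟨h2a, h2b⟩ := hb (c.1+2) (by omega) (by omega)
  have e1 := hmid (c.1+1) (by omega) (by omega)
  have e2 := hmid (c.1+2) (by omega) (by omega)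
  rw [← Nat.add_assoc] at e1 e2
  simp only [Matrix.toBlocks₁₂, Matrix.reindex_apply, Matrix.submatrix_apply, Equiv.symm_symm,
    Matrix.of_apply, Matrix.zero_apply]
  rcases d with l | r
  · have hl := l.2
    rw [petrie_apply, idx_inl_val, idx_inrl_val, e1, e2, if_neg (by omega)]
  · have hr := r.2
    rw [petrie_apply, idx_inl_val, idx_inrr_val, e1, e2, if_neg (by omega)]

lemma block21 (k m n : ℕ) (hk : 3 ≤ k) (τ' : ℕ → ℕ)
    (hleft : ∀ i, 1 ≤ i → i ≤ m → τ' i ≤ m)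
    (hright : ∀ x, m+k+1 ≤ x → x ≤ m+k+n → m+k+1 ≤ τ' x) :
    ∀ (d : Fin m ⊕ Fin n),
      ¬(Sum.elim (fun l : Fin m => l.1 = m - 1) (fun r : Fin n => r.1 = 0) d) →
      ∀ c : Fin (k-1),
      (reindex (idxEquiv k m n hk).symm (idxEquiv k m n hk).symm
        (petrie (m+k+n) τ')).toBlocks₂₁ d c = 0 := by
  intro d hd c
  have hc := c.2
  simp only [Matrix.toBlocks₂₁, Matrix.reindex_apply, Matrix.submatrix_apply, Equiv.symm_symm,
    Matrix.of_apply, Matrix.zero_apply]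
  rcases d with l | r
  · simp only [Sum.elim_inl] at hd
    have hl := l.2
    have hv1 := hleft (l.1+1) (by omega) (by omega)
    have hv2 := hleft (l.1+2) (by omega) (by omega)
    rw [petrie_apply, idx_inrl_val, idx_inl_val, if_neg (by omega)]
  · simp only [Sum.elim_inr] at hd
    have hr := r.2
    have hv1 := hright (m+k-1+r.1+1) (by omega) (by omega)
    have hv2 := hright (m+k-1+r.1+2) (by omega) (by omega)
    rw [petrie_apply, idx_inrr_val, idx_inl_val, if_neg (by omega)]

lemma block22d (k m n : ℕ) (hk : 3 ≤ k) (τk τ' : ℕ → ℕ)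
    (hb : ∀ j, 1 ≤ j → j ≤ k → 1 ≤ τk j ∧ τk j ≤ k)
    (hmid : ∀ j, 1 ≤ j → j ≤ k → τ' (m + j) = m + τk j)
    (hleft : ∀ i, 1 ≤ i → i ≤ m → τ' i ≤ m)
    (hright : ∀ x, m+k+1 ≤ x → x ≤ m+k+n → m+k+1 ≤ τ' x) :
    ∀ (d s : Fin m ⊕ Fin n),
      (Sum.elim (fun l : Fin m => l.1 = m - 1) (fun r : Fin n => r.1 = 0) s) →
      (reindex (idxEquiv k m n hk).symm (idxEquiv k m n hk).symm
        (petrie (m+k+n) τ')).toBlocks₂₂ d s = if d = s then 1 else 0 := by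
  intro d s hs
  simp only [Matrix.toBlocks₂₂, Matrix.reindex_apply, Matrix.submatrix_apply, Equiv.symm_symm,
    Matrix.of_apply]
  obtain ⟨hb1a, hb1b⟩ := hb 1 (by omega) (by omega)
  obtain ⟨hbka, hbkb⟩ := hb k (by omega) (by omega)
  rcases s with l' | r'
  · simp only [Sum.elim_inl] at hs
    have hl' := l'.2
    rcases d with l | r
    · have hl := l.2
      by_cases hll : l.1 = m - 1
      · have : l = l' := Fin.ext (by omega)
        subst this
        rw [if_pos rfl, petrie_apply, idx_inrl_val,
          show l.1 + 2 = m + 1 from by omega]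
        have hτm := hleft (l.1+1) (by omega) (by omega)
        rw [hmid 1 (by omega) (by omega), if_pos (by omega)]
      · have hne : (Sum.inl l : Fin m ⊕ Fin n) ≠ Sum.inl l' := by
          simp only [ne_eq, Sum.inl.injEq, Fin.ext_iff]; omega
        rw [if_neg hne, petrie_apply, idx_inrl_val, idx_inrl_val]
        have hv1 := hleft (l.1+1) (by omega) (by omega)
        have hv2 := hleft (l.1+2) (by omega) (by omega)
        rw [if_neg (by omega)]
    · have hr := r.2
      rw [if_neg (by simp), petrie_apply, idx_inrr_val, idx_inrl_val]
      by_cases hr0 : r.1 = 0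
      · rw [show m + k - 1 + r.1 + 1 = m + k from by omega,
          show m + k - 1 + r.1 + 2 = m + k + 1 from by omega,
          hmid k (by omega) (by omega)]
        have hT := hright (m+k+1) (by omega) (by omega)
        rw [if_neg (by omega)]
      · have hv1 := hright (m+k-1+r.1+1) (by omega) (by omega)
        have hv2 := hright (m+k-1+r.1+2) (by omega) (by omega)
        rw [if_neg (by omega)]
  · simp only [Sum.elim_inr] at hs
    have hr' := r'.2
    rcases d with l | r
    · have hl := l.2
      rw [if_neg (by simp), petrie_apply, idx_inrl_val, idx_inrr_val]
      by_cases hll : l.1 = m - 1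
      · rw [show l.1 + 2 = m + 1 from by omega, hmid 1 (by omega) (by omega)]
        have hτm := hleft (l.1+1) (by omega) (by omega)
        rw [if_neg (by omega)]
      · have hv1 := hleft (l.1+1) (by omega) (by omega)
        have hv2 := hleft (l.1+2) (by omega) (by omega)
        rw [if_neg (by omega)]
    · have hr := r.2
      by_cases hr0 : r.1 = 0
      · have : r = r' := Fin.ext (by omega)
        subst this
        rw [if_pos rfl, petrie_apply, idx_inrr_val,
          show m + k - 1 + r.1 + 2 = m + k + 1 from by omega]
        have hT := hright (m+k+1) (by omega) (by omega)
        rw [show m + k - 1 + r.1 + 1 = m + k from by omega, hmid k (by omega) (by omega),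
          if_pos (by omega)]
      · have hne : (Sum.inr r : Fin m ⊕ Fin n) ≠ Sum.inr r' := by
          simp only [ne_eq, Sum.inr.injEq, Fin.ext_iff]; omega
        rw [if_neg hne, petrie_apply, idx_inrr_val, idx_inrr_val]
        have hv1 := hright (m+k-1+r.1+1) (by omega) (by omega)
        have hv2 := hright (m+k-1+r.1+2) (by omega) (by omega)
        rw [if_neg (by omega)]

lemma block22eq (k m n : ℕ) (hk : 3 ≤ k) (σk ρk σ' ρ' : ℕ → ℕ)
    (hbσ : ∀ j, 1 ≤ j → j ≤ k → 1 ≤ σk j ∧ σk j ≤ k)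
    (hbρ : ∀ j, 1 ≤ j → j ≤ k → 1 ≤ ρk j ∧ ρk j ≤ k)
    (hmidσ : ∀ j, 1 ≤ j → j ≤ k → σ' (m + j) = m + σk j)
    (hmidρ : ∀ j, 1 ≤ j → j ≤ k → ρ' (m + j) = m + ρk j)
    (hLeq : ∀ i, 1 ≤ i → i ≤ m → σ' i = ρ' i)
    (hleftσ : ∀ i, 1 ≤ i → i ≤ m → σ' i ≤ m)
    (hReq : ∀ x, m+k+1 ≤ x → x ≤ m+k+n → σ' x = ρ' x)
    (hrightσ : ∀ x, m+k+1 ≤ x → x ≤ m+k+n → m+k+1 ≤ σ' x) :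
    (reindex (idxEquiv k m n hk).symm (idxEquiv k m n hk).symm
      (petrie (m+k+n) σ')).toBlocks₂₂ =
    (reindex (idxEquiv k m n hk).symm (idxEquiv k m n hk).symm
      (petrie (m+k+n) ρ')).toBlocks₂₂ := by
  ext d d'
  simp only [Matrix.toBlocks₂₂, Matrix.reindex_apply, Matrix.submatrix_apply, Equiv.symm_symm,
    Matrix.of_apply]
  obtain ⟨hb1a, hb1b⟩ := hbσ 1 (by omega) (by omega)
  obtain ⟨hbka, hbkb⟩ := hbσ k (by omega) (by omega)
  obtain ⟨hc1a, hc1b⟩ := hbρ 1 (by omega) (by omega)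
  obtain ⟨hcka, hckb⟩ := hbρ k (by omega) (by omega)
  rcases d with l | r
  · have hl := l.2
    rw [petrie_apply, petrie_apply, idx_inrl_val]
    by_cases hll : l.1 = m - 1
    · rw [show l.1 + 2 = m + 1 from by omega, hmidσ 1 (by omega) (by omega),
        hmidρ 1 (by omega) (by omega), show l.1 + 1 = m from by omega,
        ← hLeq m (by omega) (by omega)]
      have hσm := hleftσ m (by omega) (by omega)
      rcases d' with l' | r'
      · have hl' := l'.2
        rw [idx_inrl_val]
        exact if_congr (by omega) rfl rfl
      · have hr' := r'.2
        rw [idx_inrr_val]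
        exact if_congr (by omega) rfl rfl
    · rw [hLeq (l.1+1) (by omega) (by omega), hLeq (l.1+2) (by omega) (by omega)]
  · have hr := r.2
    rw [petrie_apply, petrie_apply, idx_inrr_val]
    by_cases hr0 : r.1 = 0
    · rw [show m + k - 1 + r.1 + 2 = m + k + 1 from by omega,
        show m + k - 1 + r.1 + 1 = m + k from by omega,
        hmidσ k (by omega) (by omega), hmidρ k (by omega) (by omega)]
      have hT := hrightσ (m+k+1) (by omega) (by omega)
      rw [hReq (m+k+1) (by omega) (by omega)] at hT ⊢
      rcases d' with l' | r'
      · have hl' := l'.2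
        rw [idx_inrl_val]
        exact if_congr (by omega) rfl rfl
      · have hr' := r'.2
        rw [idx_inrr_val]
        exact if_congr (by omega) rfl rfl
    · rw [hReq (m+k-1+r.1+1) (by omega) (by omega), hReq (m+k-1+r.1+2) (by omega) (by omega)]

lemma aux_charpoly_conj {ι : Type*} [Fintype ι] [DecidableEq ι]
    (P M : Matrix ι ι ℝ) (hP : IsUnit P) :
    (P * M * P⁻¹).charpoly = M.charpoly := by
  have hPd : IsUnit P.det := (Matrix.isUnit_iff_isUnit_det P).mp hP
  have h1 : P * P⁻¹ = 1 := Matrix.mul_nonsing_inv P hPd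
  set Pc := (C : ℝ →+* ℝ[X]).mapMatrix P with hPc
  set Qc := (C : ℝ →+* ℝ[X]).mapMatrix P⁻¹ with hQc
  have hPQ : Pc * Qc = 1 := by rw [hPc, hQc, ← _root_.map_mul, h1, _root_.map_one]
  have hchar : charmatrix (P * M * P⁻¹) = Pc * charmatrix M * Qc := by
    rw [charmatrix, charmatrix, mul_sub, sub_mul]
    congr 1
    · rw [← (Matrix.scalar_commute (X : ℝ[X]) (fun r => Commute.all _ _) Pc).eq,
        mul_assoc, hPQ, mul_one]
    · rw [hPc, hQc, ← _root_.map_mul, ← _root_.map_mul]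
  rw [Matrix.charpoly, Matrix.charpoly, hchar, det_mul, det_mul, mul_comm (Pc.det),
    mul_assoc, ← det_mul, hPQ, det_one, mul_one]

lemma aux_matSimilar_reindex {ι κ : Type*} [Fintype ι] [DecidableEq ι] [Fintype κ] [DecidableEq κ]
    (e : ι ≃ κ) (A B : Matrix ι ι ℝ)
    (h : MatSimilar (reindex e e A) (reindex e e B)) : MatSimilar A B := by
  obtain ⟨Q, hQ, hE⟩ := h
  have hQd : IsUnit Q.det := (isUnit_iff_isUnit_det Q).mp hQ
  have hQQ : Q * Q⁻¹ = 1 := mul_nonsing_inv Q hQd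
  set φ := Matrix.reindexAlgEquiv ℝ ℝ e.symm with hφ
  refine ⟨φ Q, hQ.map φ, ?_⟩
  have hinv : (φ Q)⁻¹ = φ Q⁻¹ := inv_eq_right_inv (by rw [← _root_.map_mul, hQQ, _root_.map_one])
  have := congrArg φ hE
  rw [_root_.map_mul, _root_.map_mul] at this
  simpa [hinv, hφ] using this

lemma aux_core {Ct Dt : Type*} [Fintype Ct] [Fintype Dt] [DecidableEq Ct] [DecidableEq Dt]
    (A' B' : Matrix (Ct ⊕ Dt) (Ct ⊕ Dt) ℝ) (M M' P : Matrix Ct Ct ℝ) (S : Finset Dt)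
    (hP : IsUnit P) (hMM' : M' = P * M * P⁻¹)
    (hA11 : A'.toBlocks₁₁ = M) (hB11 : B'.toBlocks₁₁ = M')
    (hA12 : A'.toBlocks₁₂ = 0) (hB12 : B'.toBlocks₁₂ = 0)
    (hW : B'.toBlocks₂₂ = A'.toBlocks₂₂)
    (hZA : ∀ d ∉ S, ∀ c, A'.toBlocks₂₁ d c = 0)
    (hZB : ∀ d ∉ S, ∀ c, B'.toBlocks₂₁ d c = 0)
    (hWc : ∀ d, ∀ s ∈ S, A'.toBlocks₂₂ d s = if d = s then 1 else 0) :
    A'.charpoly = B'.charpoly ∧ ((M' - 1).det ≠ 0 → MatSimilar A' B') := by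
  have hPd : IsUnit P.det := (Matrix.isUnit_iff_isUnit_det P).mp hP
  have hPP : P * P⁻¹ = 1 := Matrix.mul_nonsing_inv P hPd
  have hPP' : P⁻¹ * P = 1 := Matrix.nonsing_inv_mul P hPd
  have hA : A' = Matrix.fromBlocks M 0 (A'.toBlocks₂₁) (A'.toBlocks₂₂) := by
    rw [← hA11, ← hA12]; exact (Matrix.fromBlocks_toBlocks A').symm
  have hB : B' = Matrix.fromBlocks M' 0 (B'.toBlocks₂₁) (A'.toBlocks₂₂) := by
    rw [← hB11, ← hB12, ← hW]; exact (Matrix.fromBlocks_toBlocks B').symm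
  constructor
  · rw [hA, hB, Matrix.charpoly_fromBlocks_zero₁₂, Matrix.charpoly_fromBlocks_zero₁₂, hMM',
      aux_charpoly_conj P M hP]
  · intro hdet
    have hM'1 : M' - 1 = P * (M - 1) * P⁻¹ := by
      rw [hMM', mul_sub, mul_one, sub_mul, hPP]
    have hdM : (M - 1).det ≠ 0 := by
      rw [hM'1, Matrix.det_conj hP] at hdet; exact hdet
    have hMu : IsUnit (M - 1).det := isUnit_iff_ne_zero.mpr hdM
    set K : Matrix Dt Ct ℝ := (B'.toBlocks₂₁ * P - A'.toBlocks₂₁) * (M - 1)⁻¹ with hKdef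
    have hKrow : ∀ d ∉ S, ∀ c, K d c = 0 := by
      intro d hd c
      rw [hKdef, Matrix.mul_apply]
      refine Finset.sum_eq_zero fun e _ => ?_
      have h0 : (B'.toBlocks₂₁ * P - A'.toBlocks₂₁) d e = 0 := by
        rw [Matrix.sub_apply, hZA d hd e, sub_zero, Matrix.mul_apply]
        exact Finset.sum_eq_zero fun x _ => by rw [hZB d hd x, zero_mul]
      rw [h0, zero_mul]
    have hWK : A'.toBlocks₂₂ * K = K := by
      ext d c
      rw [Matrix.mul_apply]
      have hterm : ∀ x ∈ Finset.univ, A'.toBlocks₂₂ d x * K x c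
          = if x ∈ S then (if d = x then K x c else 0) else 0 := by
        intro x _
        by_cases hx : x ∈ S
        · rw [if_pos hx, hWc d x hx, boole_mul]
        · rw [if_neg hx, hKrow x hx, mul_zero]
      rw [Finset.sum_congr rfl hterm, Finset.sum_ite_mem, Finset.univ_inter,
        Finset.sum_ite_eq]
      by_cases hd : d ∈ S
      · rw [if_pos hd]
      · rw [if_neg hd, hKrow d hd c]
    have hKM : K * (M - 1) = B'.toBlocks₂₁ * P - A'.toBlocks₂₁ := by
      rw [hKdef, Matrix.mul_assoc, Matrix.nonsing_inv_mul _ hMu, Matrix.mul_one]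
    rw [Matrix.mul_sub, Matrix.mul_one] at hKM
    refine ⟨Matrix.fromBlocks P 0 K 1, ?_, ?_⟩
    · refine (Matrix.isUnit_iff_isUnit_det _).mpr ?_
      rw [Matrix.det_fromBlocks_zero₁₂, Matrix.det_one, mul_one]
      exact hPd
    · have hQdet : IsUnit (Matrix.fromBlocks P 0 K (1 : Matrix Dt Dt ℝ)).det := by
        rw [Matrix.det_fromBlocks_zero₁₂, Matrix.det_one, mul_one]; exact hPd
      have hcomm : Matrix.fromBlocks P 0 K 1 * A' = B' * Matrix.fromBlocks P 0 K 1 := by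
        rw [hA, hB, Matrix.fromBlocks_multiply, Matrix.fromBlocks_multiply]
        have hM'P : M' * P = P * M := by rw [hMM', mul_assoc, hPP', mul_one]
        rw [Matrix.fromBlocks_inj]
        refine ⟨by simp [hM'P], by simp, ?_, by simp⟩
        · rw [Matrix.one_mul, hWK]
          exact sub_eq_sub_iff_add_eq_add.mp hKM
      rw [hcomm, mul_assoc, Matrix.mul_nonsing_inv _ hQdet, mul_one]

end AuxPetrie

/-- Theorem 5(2). -/
theorem charpoly_eq_of_petrie_similar_no_fixed_endpoint
    (k m n : ℕ) (hk : 3 ≤ k) (hmn : 1 ≤ m + n)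
    (σk ρk : ℕ → ℕ) (hσk : IsPermOn k σk) (hρk : IsPermOn k ρk)
    (hsim : MatSimilar (petrie k σk) (petrie k ρk))
    (hfix1 : ¬(σk 1 = 1 ∧ ρk 1 = 1)) (hfixk : ¬(σk k = k ∧ ρk k = k))
    (σ' ρ' : ℕ → ℕ) (hσ' : IsPermOn (m + k + n) σ') (hρ' : IsPermOn (m + k + n) ρ')
    (h1 : ∀ i, 1 ≤ i → i ≤ m → σ' i = ρ' i ∧ σ' i ≤ m)
    (h2 : ∀ j, 1 ≤ j → j ≤ k → σ' (m + j) = m + σk j ∧ ρ' (m + j) = m + ρk j)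
    (h3 : ∀ x, m + k + 1 ≤ x → x ≤ m + k + n → σ' x = ρ' x ∧ m + k + 1 ≤ σ' x) :
    (petrie (m + k + n) σ').charpoly = (petrie (m + k + n) ρ').charpoly ∧
    ((petrie k ρk - 1).det ≠ 0 →
      MatSimilar (petrie (m + k + n) σ') (petrie (m + k + n) ρ')) := by
  classical
  haveI : DecidablePred (fun d : Fin m ⊕ Fin n =>
      Sum.elim (fun l : Fin m => l.1 = m - 1) (fun r : Fin n => r.1 = 0) d) := fun d => by
    rcases d with l | r <;> simp only [Sum.elim_inl, Sum.elim_inr] <;> infer_instance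
  set S : Finset (Fin m ⊕ Fin n) := Finset.univ.filter (fun d =>
    Sum.elim (fun l : Fin m => l.1 = m - 1) (fun r : Fin n => r.1 = 0) d) with hSdef
  have hσkB : ∀ j, 1 ≤ j → j ≤ k → 1 ≤ σk j ∧ σk j ≤ k := fun j hj1 hj2 =>
    Set.mem_Icc.mp (hσk.mapsTo (Set.mem_Icc.mpr ⟨hj1, hj2⟩))
  have hρkB : ∀ j, 1 ≤ j → j ≤ k → 1 ≤ ρk j ∧ ρk j ≤ k := fun j hj1 hj2 =>
    Set.mem_Icc.mp (hρk.mapsTo (Set.mem_Icc.mpr ⟨hj1, hj2⟩))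
  have hmidσ : ∀ j, 1 ≤ j → j ≤ k → σ' (m + j) = m + σk j := fun j h h' => (h2 j h h').1
  have hmidρ : ∀ j, 1 ≤ j → j ≤ k → ρ' (m + j) = m + ρk j := fun j h h' => (h2 j h h').2
  have hLeq : ∀ i, 1 ≤ i → i ≤ m → σ' i = ρ' i := fun i h h' => (h1 i h h').1
  have hleftσ : ∀ i, 1 ≤ i → i ≤ m → σ' i ≤ m := fun i h h' => (h1 i h h').2
  have hleftρ : ∀ i, 1 ≤ i → i ≤ m → ρ' i ≤ m := fun i h h' => by
    rw [← (h1 i h h').1]; exact (h1 i h h').2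
  have hReq : ∀ x, m+k+1 ≤ x → x ≤ m+k+n → σ' x = ρ' x := fun x h h' => (h3 x h h').1
  have hrightσ : ∀ x, m+k+1 ≤ x → x ≤ m+k+n → m+k+1 ≤ σ' x := fun x h h' => (h3 x h h').2
  have hrightρ : ∀ x, m+k+1 ≤ x → x ≤ m+k+n → m+k+1 ≤ ρ' x := fun x h h' => by
    rw [← (h3 x h h').1]; exact (h3 x h h').2
  obtain ⟨P, hPu, hPe⟩ := hsim
  have key := aux_core
    (reindex (idxEquiv k m n hk).symm (idxEquiv k m n hk).symm (petrie (m+k+n) σ'))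
    (reindex (idxEquiv k m n hk).symm (idxEquiv k m n hk).symm (petrie (m+k+n) ρ'))
    (petrie k σk) (petrie k ρk) P S hPu hPe
    (block11 k m n hk σk σ' hσkB hmidσ)
    (block11 k m n hk ρk ρ' hρkB hmidρ)
    (block12 k m n hk σk σ' hσkB hmidσ)
    (block12 k m n hk ρk ρ' hρkB hmidρ)
    (block22eq k m n hk σk ρk σ' ρ' hσkB hρkB hmidσ hmidρ hLeq hleftσ hReq hrightσ).symm
    (fun d hd c => block21 k m n hk σ' hleftσ hrightσ d
      (fun hpd => hd (Finset.mem_filter.mpr ⟨Finset.mem_univ d, hpd⟩)) c)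
    (fun d hd c => block21 k m n hk ρ' hleftρ hrightρ d
      (fun hpd => hd (Finset.mem_filter.mpr ⟨Finset.mem_univ d, hpd⟩)) c)
    (fun d s hs => block22d k m n hk σk σ' hσkB hmidσ hleftσ hrightσ d s
      (Finset.mem_filter.mp hs).2)
  refine ⟨?_, fun hdet => ?_⟩
  · have h := key.1
    rwa [Matrix.charpoly_reindex, Matrix.charpoly_reindex] at h
  · exact aux_matSimilar_reindex (idxEquiv k m n hk).symm _ _ (key.2 hdet)
end
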